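/- arXiv:1603.09079 — 9 statements merged into one kernel-verified Lean document; each statement's English description precedes it below -/
import Mathlib

section
/- Let x₀, y₀ be real numbers and let u, a, f : ℝ × ℝ → ℝ be continuous functions that are nonnegative on Q = [x₀,∞) × [y₀,∞), with a nondecreasing in each of its two variables on Q. If for all (x,y) ∈ Q one has u(x,y) ≤ a(x,y) + ∫_{x₀}^{x} ∫_{y₀}^{y} f(s,t) u(s,t) dt ds, then for all (x,y) ∈ Q one has u(x,y) ≤ a(x,y) · exp(∫_{x₀}^{x} ∫_{y₀}^{y} f(s,t) dt ds). -/
/-!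
Fix `(X, Y) ∈ Q`. Monotonicity of `a` and nonnegativity of `f u` give
`u x t ≤ w x := a X Y + ∫_{x₀}^{x} ∫_{y₀}^{Y} f u` on `[x₀, X] × [y₀, Y]`, hence
`w' ≤ p w` with `p s = ∫_{y₀}^{Y} f(s, t) dt`. The one-variable Gronwall inequality with
variable coefficient `p` (integrating factor `exp (-∫ p)`) then bounds `w X` by
`a X Y · exp (∫_{x₀}^{X} p)`.
-/

open Set Function intervalIntegral

theorem le_mul_exp_integral_of_hasDerivAt_le_mul {w w' p : ℝ → ℝ} {a b : ℝ} (hab : a ≤ b)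
    (hp : Continuous p) (hw : ContinuousOn w (Icc a b))
    (hw' : ∀ x ∈ Ioo a b, HasDerivAt w (w' x) x) (hbound : ∀ x ∈ Ioo a b, w' x ≤ p x * w x) :
    w b ≤ w a * Real.exp (∫ s in a..b, p s) := by
  set P : ℝ → ℝ := fun x => ∫ s in a..x, p s
  have hP : ∀ x, HasDerivAt P (p x) x := fun x => (hp.integral_hasStrictDerivAt a x).hasDerivAt
  have hPc : Continuous P := continuous_iff_continuousAt.2 fun x => (hP x).continuousAt
  have hanti : AntitoneOn (fun x => w x * Real.exp (-P x)) (Icc a b) := by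
    refine antitoneOn_of_hasDerivWithinAt_nonpos
      (f' := fun x => (w' x - p x * w x) * Real.exp (-P x))
      (convex_Icc a b) (hw.mul hPc.neg.rexp.continuousOn) (fun x hx => ?_) (fun x hx => ?_)
    · rw [interior_Icc] at hx
      exact ((hw' x hx).mul (hP x).neg.exp).hasDerivWithinAt.congr_deriv
        (by simp only [Pi.neg_apply]; ring)
    · rw [interior_Icc] at hx
      exact mul_nonpos_of_nonpos_of_nonneg (sub_nonpos.2 (hbound x hx)) (Real.exp_pos _).le
  have hwb := hanti (left_mem_Icc.2 hab) (right_mem_Icc.2 hab) hab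
  simp only [P, integral_same, neg_zero, Real.exp_zero, mul_one] at hwb
  calc w b = w b * Real.exp (-P b) * Real.exp (P b) := by
        rw [mul_assoc, ← Real.exp_add, neg_add_cancel, Real.exp_zero, mul_one]
    _ ≤ w a * Real.exp (P b) := by gcongr

theorem integral_mul_le_integral_mul_of_le {f g : ℝ → ℝ} {a b M : ℝ} (hab : a ≤ b)
    (hf : Continuous f) (hg : Continuous g) (hf₀ : ∀ t ∈ Icc a b, 0 ≤ f t)
    (hgM : ∀ t ∈ Icc a b, g t ≤ M) :
    ∫ t in a..b, f t * g t ≤ (∫ t in a..b, f t) * M := by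
  rw [← integral_mul_const]
  exact integral_mono_on hab ((hf.mul hg).intervalIntegrable _ _)
    ((hf.mul continuous_const).intervalIntegrable _ _)
    fun t ht => mul_le_mul_of_nonneg_left (hgM t ht) (hf₀ t ht)

theorem integral_integral_mono_interval_right {F : ℝ → ℝ → ℝ} {a b c d d' : ℝ}
    (hF : Continuous (uncurry F)) (hab : a ≤ b) (hcd : c ≤ d) (hdd' : d ≤ d')
    (hF₀ : ∀ s ∈ Icc a b, ∀ t ∈ Icc c d', 0 ≤ F s t) :
    ∫ s in a..b, ∫ t in c..d, F s t ≤ ∫ s in a..b, ∫ t in c..d', F s t := by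
  refine integral_mono_on hab
    ((continuous_parametric_intervalIntegral_of_continuous' hF c d).intervalIntegrable _ _)
    ((continuous_parametric_intervalIntegral_of_continuous' hF c d').intervalIntegrable _ _)
    fun s hs => integral_mono_interval le_rfl hcd hdd' ?_
      ((hF.comp (Continuous.prodMk_right s)).intervalIntegrable _ _)
  filter_upwards [MeasureTheory.ae_restrict_mem measurableSet_Ioc] with t ht
  exact hF₀ s hs t (Ioc_subset_Icc_self ht)

theorem stmt_0_general (x₀ y₀ : ℝ) (u a f : ℝ → ℝ → ℝ)
    (hu_cont : Continuous (fun p : ℝ × ℝ => u p.1 p.2))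
    (hf_cont : Continuous (fun p : ℝ × ℝ => f p.1 p.2))
    (hu_nonneg : ∀ x, x₀ ≤ x → ∀ y, y₀ ≤ y → 0 ≤ u x y)
    (hf_nonneg : ∀ x, x₀ ≤ x → ∀ y, y₀ ≤ y → 0 ≤ f x y)
    (ha_mono1 : ∀ x₁ x₂ y, x₀ ≤ x₁ → x₁ ≤ x₂ → y₀ ≤ y → a x₁ y ≤ a x₂ y)
    (ha_mono2 : ∀ x y₁ y₂, x₀ ≤ x → y₀ ≤ y₁ → y₁ ≤ y₂ → a x y₁ ≤ a x y₂)
    (hineq : ∀ x, x₀ ≤ x → ∀ y, y₀ ≤ y →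
      u x y ≤ a x y + ∫ s in x₀..x, ∫ t in y₀..y, f s t * u s t) :
    ∀ x, x₀ ≤ x → ∀ y, y₀ ≤ y →
      u x y ≤ a x y * Real.exp (∫ s in x₀..x, ∫ t in y₀..y, f s t) := by
  intro X hX Y hY
  have hfu_cont : Continuous (uncurry fun s t => f s t * u s t) := hf_cont.mul hu_cont
  set g : ℝ → ℝ := fun s => ∫ t in y₀..Y, f s t * u s t
  have hg : Continuous g := continuous_parametric_intervalIntegral_of_continuous' hfu_cont y₀ Y
  set w : ℝ → ℝ := fun x => a X Y + ∫ s in x₀..x, g s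
  have hw' : ∀ x, HasDerivAt w (g x) x := fun x =>
    (hg.integral_hasStrictDerivAt x₀ x).hasDerivAt.const_add _
  have hu_le : ∀ x ∈ Icc x₀ X, ∀ t ∈ Icc y₀ Y, u x t ≤ w x := fun x hx t ht =>
    (hineq x hx.1 t ht.1).trans <| add_le_add
      ((ha_mono2 x t Y hx.1 ht.1 ht.2).trans (ha_mono1 x X Y hx.1 hx.2 hY))
      (integral_integral_mono_interval_right hfu_cont hx.1 ht.1 ht.2 fun s hs t' ht' =>
        mul_nonneg (hf_nonneg s hs.1 t' ht'.1) (hu_nonneg s hs.1 t' ht'.1))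
  calc u X Y ≤ w X := hineq X hX Y hY
    _ ≤ w x₀ * Real.exp (∫ s in x₀..X, ∫ t in y₀..Y, f s t) :=
      le_mul_exp_integral_of_hasDerivAt_le_mul hX
        (continuous_parametric_intervalIntegral_of_continuous' hf_cont y₀ Y)
        (fun x _ => (hw' x).continuousAt.continuousWithinAt) (fun x _ => hw' x)
        fun x hx => integral_mul_le_integral_mul_of_le hY
          (hf_cont.comp (Continuous.prodMk_right x)) (hu_cont.comp (Continuous.prodMk_right x))
          (fun t ht => hf_nonneg x hx.1.le t ht.1) (hu_le x (Ioo_subset_Icc_self hx))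
    _ = a X Y * Real.exp (∫ s in x₀..X, ∫ t in y₀..Y, f s t) := by
      simp only [w, integral_same, add_zero]

/-- Continuous (𝕋 = ℝ) case of the two-variable Gronwall-type lemma:
if `u(x,y) ≤ a(x,y) + ∫_{x₀}^{x} ∫_{y₀}^{y} f(s,t) u(s,t) dt ds` on
`Q = [x₀,∞) × [y₀,∞)`, with `u, a, f` continuous and nonnegative on `Q`
and `a` nondecreasing in each variable on `Q`, then
`u(x,y) ≤ a(x,y) · exp (∫_{x₀}^{x} ∫_{y₀}^{y} f(s,t) dt ds)` on `Q`. -/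
theorem stmt_0 (x₀ y₀ : ℝ) (u a f : ℝ → ℝ → ℝ)
    (hu_cont : Continuous (fun p : ℝ × ℝ => u p.1 p.2))
    (ha_cont : Continuous (fun p : ℝ × ℝ => a p.1 p.2))
    (hf_cont : Continuous (fun p : ℝ × ℝ => f p.1 p.2))
    (hu_nonneg : ∀ x, x₀ ≤ x → ∀ y, y₀ ≤ y → 0 ≤ u x y)
    (ha_nonneg : ∀ x, x₀ ≤ x → ∀ y, y₀ ≤ y → 0 ≤ a x y)
    (hf_nonneg : ∀ x, x₀ ≤ x → ∀ y, y₀ ≤ y → 0 ≤ f x y)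
    (ha_mono1 : ∀ x₁ x₂ y, x₀ ≤ x₁ → x₁ ≤ x₂ → y₀ ≤ y → a x₁ y ≤ a x₂ y)
    (ha_mono2 : ∀ x y₁ y₂, x₀ ≤ x → y₀ ≤ y₁ → y₁ ≤ y₂ → a x y₁ ≤ a x y₂)
    (hineq : ∀ x, x₀ ≤ x → ∀ y, y₀ ≤ y →
      u x y ≤ a x y + ∫ s in x₀..x, ∫ t in y₀..y, f s t * u s t) :
    ∀ x, x₀ ≤ x → ∀ y, y₀ ≤ y →
      u x y ≤ a x y * Real.exp (∫ s in x₀..x, ∫ t in y₀..y, f s t) :=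
  stmt_0_general x₀ y₀ u a f hu_cont hf_cont hu_nonneg hf_nonneg ha_mono1 ha_mono2 hineq
end

section
/- Let u, a, f : ℕ × ℕ → ℝ be nonnegative functions with a nondecreasing in each of its two variables. If for all (x,y) ∈ ℕ × ℕ one has u(x,y) ≤ a(x,y) + Σ_{s=0}^{x-1} Σ_{t=0}^{y-1} f(s,t) u(s,t), then for all (x,y) ∈ ℕ × ℕ one has u(x,y) ≤ a(x,y) · ∏_{s=0}^{x-1} (1 + Σ_{t=0}^{y-1} f(s,t)). -/
/-!
Fix `(X, Y)` and put `A = a X Y`, `g s = ∑_{t<Y} f s t` and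
`z x = ∑_{s<x} ∑_{t<Y} f s t * u s t`. For `x ≤ X` and `t < Y` monotonicity of `a` and
nonnegativity of the integrand give `u x t ≤ A + z x`, hence
`A + z (x+1) ≤ (A + z x) * (1 + g x)`. Iterating this one-variable recursion up to `X` yields
`u X Y ≤ A + z X ≤ A * ∏_{s<X} (1 + g s)`.
-/

open Finset

theorem le_mul_prod_range_of_succ_le_mul {R : Type*} [CommSemiring R] [PartialOrder R]
    [IsOrderedRing R] {w c : ℕ → R} {N : ℕ} (hc : ∀ n < N, 0 ≤ c n)
    (hw : ∀ n < N, w (n + 1) ≤ w n * c n) :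
    ∀ n ≤ N, w n ≤ w 0 * ∏ s ∈ range n, c s := by
  intro n hn
  induction n with
  | zero => simp
  | succ n ih =>
    calc w (n + 1) ≤ w n * c n := hw n hn
      _ ≤ (w 0 * ∏ s ∈ range n, c s) * c n :=
        mul_le_mul_of_nonneg_right (ih (Nat.le_of_succ_le hn)) (hc n hn)
      _ = w 0 * ∏ s ∈ range (n + 1), c s := by rw [prod_range_succ, mul_assoc]

theorem sum_range_sum_range_mono_right {M : Type*} [AddCommMonoid M] [PartialOrder M]
    [IsOrderedAddMonoid M] {F : ℕ → ℕ → M} (hF : ∀ s t, 0 ≤ F s t) (x : ℕ) {y₁ y₂ : ℕ}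
    (hy : y₁ ≤ y₂) :
    ∑ s ∈ range x, ∑ t ∈ range y₁, F s t ≤ ∑ s ∈ range x, ∑ t ∈ range y₂, F s t :=
  sum_le_sum fun s _ => sum_le_sum_of_subset_of_nonneg (range_mono hy) fun t _ _ => hF s t

theorem add_sum_range_sum_range_le_mul_prod {u a f : ℕ → ℕ → ℝ}
    (hu : ∀ x y, 0 ≤ u x y) (hf : ∀ x y, 0 ≤ f x y)
    (ha₁ : ∀ x₁ x₂ y, x₁ ≤ x₂ → a x₁ y ≤ a x₂ y) (ha₂ : ∀ x y₁ y₂, y₁ ≤ y₂ → a x y₁ ≤ a x y₂)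
    (hineq : ∀ x y, u x y ≤ a x y + ∑ s ∈ range x, ∑ t ∈ range y, f s t * u s t) (X Y : ℕ) :
    ∀ x ≤ X, a X Y + ∑ s ∈ range x, ∑ t ∈ range Y, f s t * u s t ≤
      a X Y * ∏ s ∈ range x, (1 + ∑ t ∈ range Y, f s t) := by
  set w : ℕ → ℝ := fun x => a X Y + ∑ s ∈ range x, ∑ t ∈ range Y, f s t * u s t with hw
  have hfu : ∀ s t, 0 ≤ f s t * u s t := fun s t => mul_nonneg (hf s t) (hu s t)
  have hu_le : ∀ x < X, ∀ t < Y, u x t ≤ w x := by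
    intro x hx t ht
    have ha : a x t ≤ a X Y := (ha₁ x X t hx.le).trans (ha₂ X t Y ht.le)
    have hsum := sum_range_sum_range_mono_right hfu x ht.le
    linarith [hineq x t]
  have hstep : ∀ x < X, w (x + 1) ≤ w x * (1 + ∑ t ∈ range Y, f x t) := by
    intro x hx
    have hrow : ∑ t ∈ range Y, f x t * u x t ≤ ∑ t ∈ range Y, f x t * w x :=
      sum_le_sum fun t ht =>
        mul_le_mul_of_nonneg_left (hu_le x hx t (mem_range.mp ht)) (hf x t)
    calc w (x + 1) = w x + ∑ t ∈ range Y, f x t * u x t := by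
          simp only [hw, sum_range_succ, add_assoc]
      _ ≤ w x + (∑ t ∈ range Y, f x t) * w x := by rw [sum_mul]; linarith
      _ = w x * (1 + ∑ t ∈ range Y, f x t) := by ring
  have hc : ∀ x < X, 0 ≤ 1 + ∑ t ∈ range Y, f x t := fun x _ =>
    add_nonneg zero_le_one (sum_nonneg fun t _ => hf x t)
  simpa [hw] using le_mul_prod_range_of_succ_le_mul hc hstep

theorem stmt_1_general (u a f : ℕ → ℕ → ℝ)
    (hu_nonneg : ∀ x y, 0 ≤ u x y)
    (hf_nonneg : ∀ x y, 0 ≤ f x y)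
    (ha_mono1 : ∀ x₁ x₂ y, x₁ ≤ x₂ → a x₁ y ≤ a x₂ y)
    (ha_mono2 : ∀ x y₁ y₂, y₁ ≤ y₂ → a x y₁ ≤ a x y₂)
    (hineq : ∀ x y, u x y ≤ a x y +
      ∑ s ∈ Finset.range x, ∑ t ∈ Finset.range y, f s t * u s t) :
    ∀ x y, u x y ≤ a x y *
      ∏ s ∈ Finset.range x, (1 + ∑ t ∈ Finset.range y, f s t) := fun X Y =>
  (hineq X Y).trans <|
    add_sum_range_sum_range_le_mul_prod hu_nonneg hf_nonneg ha_mono1 ha_mono2 hineq X Y X le_rfl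

/-- Discrete (𝕋 = ℤ, restricted to ℕ with base point 0) case of the
two-variable Gronwall-type lemma:
if `u(x,y) ≤ a(x,y) + Σ_{s<x} Σ_{t<y} f(s,t) u(s,t)` for all `x y : ℕ`,
with `u, a, f` nonnegative and `a` nondecreasing in each variable, then
`u(x,y) ≤ a(x,y) · ∏_{s<x} (1 + Σ_{t<y} f(s,t))`. -/
theorem stmt_1 (u a f : ℕ → ℕ → ℝ)
    (hu_nonneg : ∀ x y, 0 ≤ u x y)
    (ha_nonneg : ∀ x y, 0 ≤ a x y)
    (hf_nonneg : ∀ x y, 0 ≤ f x y)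
    (ha_mono1 : ∀ x₁ x₂ y, x₁ ≤ x₂ → a x₁ y ≤ a x₂ y)
    (ha_mono2 : ∀ x y₁ y₂, y₁ ≤ y₂ → a x y₁ ≤ a x y₂)
    (hineq : ∀ x y, u x y ≤ a x y +
      ∑ s ∈ Finset.range x, ∑ t ∈ Finset.range y, f s t * u s t) :
    ∀ x y, u x y ≤ a x y *
      ∏ s ∈ Finset.range x, (1 + ∑ t ∈ Finset.range y, f s t) :=
  stmt_1_general u a f hu_nonneg hf_nonneg ha_mono1 ha_mono2 hineq
end

section
/- Let x₀, y₀, a, b be real numbers with a ≤ b, and let H = [x₀,∞) × [y₀,∞) × [a,b]. Let u, p₁, p₂, f : ℝ³ → ℝ be continuous functions that are nonnegative on H. Suppose that for all (x,y,z) ∈ H one has u(x,y,z) ≤ p₁(x,y,z) + p₂(x,y,z) · ∫_{x₀}^{x} ∫_{y₀}^{y} ∫_{a}^{b} f(s,τ,q) u(s,τ,q) dq dτ ds. Then for all (x,y,z) ∈ H one has u(x,y,z) ≤ p₁(x,y,z) + p₂(x,y,z) · C(x,y) · exp(∫_{x₀}^{x} Q(s,y) ds), where Q(s,y) = ∫_{y₀}^{y}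 ∫_{a}^{b} f(s,τ,q) p₂(s,τ,q) dq dτ and C(x,y) = ∫_{x₀}^{x} ∫_{y₀}^{y} ∫_{a}^{b} f(s,τ,q) p₁(s,τ,q) dq dτ ds. -/
/-!
Fix `y` and put `V x = ∫_{x₀}^x ∫_{y₀}^y ∫_a^b f u`. The integrand is nonnegative, so for
`τ ≤ y` the triple integral in the hypothesis at `(s, τ, q)` is at most `V s`, whence
`u ≤ p₁ + p₂ V(s)` on `[x₀, ∞) × [y₀, y] × [a, b]`. Integrating this against `f` over
`[y₀, y] × [a, b]` gives the linear differential inequality `V' ≤ c + Q V` with `c, Q ≥ 0`, and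
the integrating factor `exp (-∫ Q)` turns it into `V x ≤ (∫ c) exp (∫ Q)`.
-/

open MeasureTheory Set intervalIntegral

theorem integral_le_integral_add_integral_mul {g c Q : ℝ → ℝ} {a b K : ℝ} (hab : a ≤ b)
    (hg : IntervalIntegrable g volume a b) (hc : IntervalIntegrable c volume a b)
    (hQ : IntervalIntegrable Q volume a b) (hle : ∀ t ∈ Icc a b, g t ≤ c t + Q t * K) :
    ∫ t in a..b, g t ≤ (∫ t in a..b, c t) + (∫ t in a..b, Q t) * K := by
  rw [← intervalIntegral.integral_mul_const, ← intervalIntegral.integral_add hc (hQ.mul_const K)]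
  exact integral_mono_on hab hg (hc.add (hQ.mul_const K)) hle

theorem integral_integral_mul_le_of_le_add_mul {f u p₁ p₂ : ℝ → ℝ → ℝ} {y₀ y a b K : ℝ}
    (hy : y₀ ≤ y) (hab : a ≤ b) (hf : Continuous (Function.uncurry f))
    (hu : Continuous (Function.uncurry u)) (hp₁ : Continuous (Function.uncurry p₁))
    (hp₂ : Continuous (Function.uncurry p₂)) (hf₀ : ∀ τ ∈ Icc y₀ y, ∀ q ∈ Icc a b, 0 ≤ f τ q)
    (hle : ∀ τ ∈ Icc y₀ y, ∀ q ∈ Icc a b, u τ q ≤ p₁ τ q + p₂ τ q * K) :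
    ∫ τ in y₀..y, ∫ q in a..b, f τ q * u τ q ≤
      (∫ τ in y₀..y, ∫ q in a..b, f τ q * p₁ τ q) +
        (∫ τ in y₀..y, ∫ q in a..b, f τ q * p₂ τ q) * K := by
  refine integral_le_integral_add_integral_mul hy ?_ ?_ ?_ fun τ hτ ↦
    integral_le_integral_add_integral_mul hab ?_ ?_ ?_ fun q hq ↦ ?_
  all_goals try exact Continuous.intervalIntegrable (by fun_prop) _ _
  calc f τ q * u τ q ≤ f τ q * (p₁ τ q + p₂ τ q * K) :=
        mul_le_mul_of_nonneg_left (hle τ hτ q hq) (hf₀ τ hτ q hq)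
    _ = f τ q * p₁ τ q + f τ q * p₂ τ q * K := by ring

theorem integral_integral_le_of_le_upper {Φ : ℝ → ℝ → ℝ} {x₀ y₀ s τ y : ℝ}
    (hΦ : Continuous (Function.uncurry Φ))
    (hΦ₀ : ∀ s' ∈ Icc x₀ s, ∀ τ' ∈ Icc y₀ y, 0 ≤ Φ s' τ')
    (hs : x₀ ≤ s) (hτ : y₀ ≤ τ) (hτy : τ ≤ y) :
    ∫ s' in x₀..s, ∫ τ' in y₀..τ, Φ s' τ' ≤ ∫ s' in x₀..s, ∫ τ' in y₀..y, Φ s' τ' := by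
  refine integral_mono_on hs (Continuous.intervalIntegrable (by fun_prop) _ _)
    (Continuous.intervalIntegrable (by fun_prop) _ _) fun s' hs' ↦ ?_
  refine integral_mono_interval le_rfl hτ hτy ?_ (Continuous.intervalIntegrable (by fun_prop) _ _)
  exact ae_restrict_of_forall_mem measurableSet_Ioc fun τ' hτ' ↦
    hΦ₀ s' hs' τ' (Ioc_subset_Icc_self hτ')

theorem integral_le_integral_mul_exp_integral {g c Q : ℝ → ℝ} {x₀ x : ℝ} (hx : x₀ ≤ x)
    (hg : Continuous g) (hc : Continuous c) (hQ : Continuous Q)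
    (hc₀ : ∀ t ∈ Icc x₀ x, 0 ≤ c t) (hQ₀ : ∀ t ∈ Icc x₀ x, 0 ≤ Q t)
    (hle : ∀ t ∈ Icc x₀ x, g t ≤ c t + Q t * ∫ s in x₀..t, g s) :
    ∫ s in x₀..x, g s ≤ (∫ s in x₀..x, c s) * Real.exp (∫ s in x₀..x, Q s) := by
  set V := fun t ↦ ∫ s in x₀..t, g s
  set C := fun t ↦ ∫ s in x₀..t, c s
  set R := fun t ↦ ∫ s in x₀..t, Q s
  have hV : ∀ t, HasDerivAt V (g t) t := fun t ↦ (hg.integral_hasStrictDerivAt x₀ t).hasDerivAt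
  have hC : ∀ t, HasDerivAt C (c t) t := fun t ↦ (hc.integral_hasStrictDerivAt x₀ t).hasDerivAt
  have hR : ∀ t, HasDerivAt R (Q t) t := fun t ↦ (hQ.integral_hasStrictDerivAt x₀ t).hasDerivAt
  have hD : ∀ t, HasDerivAt (fun t ↦ C t - V t * Real.exp (-R t))
      (c t - (g t - Q t * V t) * Real.exp (-R t)) t := fun t ↦
    ((hC t).sub ((hV t).mul (hR t).neg.exp)).congr_deriv (by simp only [Pi.neg_apply]; ring)
  have hmono : MonotoneOn (fun t ↦ C t - V t * Real.exp (-R t)) (Icc x₀ x) := by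
    refine monotoneOn_of_hasDerivWithinAt_nonneg (convex_Icc x₀ x)
      (fun t _ ↦ (hD t).continuousAt.continuousWithinAt) (fun t _ ↦ (hD t).hasDerivWithinAt)
      fun t ht ↦ ?_
    have ht : t ∈ Icc x₀ x := interior_subset ht
    have hRt : 0 ≤ R t := integral_nonneg ht.1 fun s hs ↦ hQ₀ s ⟨hs.1, hs.2.trans ht.2⟩
    have hgt : (g t - Q t * V t) * Real.exp (-R t) ≤ c t * Real.exp (-R t) :=
      mul_le_mul_of_nonneg_right (by linarith [hle t ht]) (Real.exp_pos _).le
    calc 0 ≤ c t * (1 - Real.exp (-R t)) :=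
          mul_nonneg (hc₀ t ht) (by linarith [Real.exp_le_one_iff.2 (neg_nonpos.2 hRt)])
      _ ≤ c t - (g t - Q t * V t) * Real.exp (-R t) := by linarith
  have h := hmono (left_mem_Icc.2 hx) (right_mem_Icc.2 hx) hx
  simp only [C, V, R, integral_same, zero_mul, sub_zero, sub_nonneg] at h
  rwa [Real.exp_neg, ← div_eq_mul_inv, div_le_iff₀ (Real.exp_pos _)] at h

/-- Continuous (𝕋₁ = 𝕋₂ = ℝ) case of the paper's main Theorem 2.1:
a Gronwall-type estimate for an integral inequality in three variables on
`H = [x₀,∞) × [y₀,∞) × [a,b]`. -/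
theorem stmt_2 (x₀ y₀ a b : ℝ) (hab : a ≤ b) (u p₁ p₂ f : ℝ → ℝ → ℝ → ℝ)
    (hu_cont : Continuous (fun p : ℝ × ℝ × ℝ => u p.1 p.2.1 p.2.2))
    (hp₁_cont : Continuous (fun p : ℝ × ℝ × ℝ => p₁ p.1 p.2.1 p.2.2))
    (hp₂_cont : Continuous (fun p : ℝ × ℝ × ℝ => p₂ p.1 p.2.1 p.2.2))
    (hf_cont : Continuous (fun p : ℝ × ℝ × ℝ => f p.1 p.2.1 p.2.2))
    (hu_nonneg : ∀ x, x₀ ≤ x → ∀ y, y₀ ≤ y → ∀ z ∈ Set.Icc a b, 0 ≤ u x y z)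
    (hp₁_nonneg : ∀ x, x₀ ≤ x → ∀ y, y₀ ≤ y → ∀ z ∈ Set.Icc a b, 0 ≤ p₁ x y z)
    (hp₂_nonneg : ∀ x, x₀ ≤ x → ∀ y, y₀ ≤ y → ∀ z ∈ Set.Icc a b, 0 ≤ p₂ x y z)
    (hf_nonneg : ∀ x, x₀ ≤ x → ∀ y, y₀ ≤ y → ∀ z ∈ Set.Icc a b, 0 ≤ f x y z)
    (hineq : ∀ x, x₀ ≤ x → ∀ y, y₀ ≤ y → ∀ z ∈ Set.Icc a b,
      u x y z ≤ p₁ x y z + p₂ x y z *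
        ∫ s in x₀..x, ∫ τ in y₀..y, ∫ q in a..b, f s τ q * u s τ q) :
    ∀ x, x₀ ≤ x → ∀ y, y₀ ≤ y → ∀ z ∈ Set.Icc a b,
      u x y z ≤ p₁ x y z + p₂ x y z *
        (∫ s in x₀..x, ∫ τ in y₀..y, ∫ q in a..b, f s τ q * p₁ s τ q) *
        Real.exp (∫ s in x₀..x, ∫ τ in y₀..y, ∫ q in a..b,
          f s τ q * p₂ s τ q) := by
  intro x hx y hy z hz
  have hinner₀ : ∀ w : ℝ → ℝ → ℝ → ℝ,
      (∀ s, x₀ ≤ s → ∀ τ, y₀ ≤ τ → ∀ q ∈ Icc a b, 0 ≤ w s τ q) →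
      ∀ s, x₀ ≤ s → ∀ τ, y₀ ≤ τ → 0 ≤ ∫ q in a..b, f s τ q * w s τ q :=
    fun w hw s hs τ hτ ↦ integral_nonneg hab fun q hq ↦
      mul_nonneg (hf_nonneg s hs τ hτ q hq) (hw s hs τ hτ q hq)
  set V := fun t ↦ ∫ s in x₀..t, ∫ τ in y₀..y, ∫ q in a..b, f s τ q * u s τ q
  have hbound : ∀ s, x₀ ≤ s → ∀ τ ∈ Icc y₀ y, ∀ q ∈ Icc a b,
      u s τ q ≤ p₁ s τ q + p₂ s τ q * V s := fun s hs τ hτ q hq ↦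
    (hineq s hs τ hτ.1 q hq).trans <| add_le_add_right (mul_le_mul_of_nonneg_left
      (integral_integral_le_of_le_upper (by fun_prop)
        (fun s' hs' τ' hτ' ↦ hinner₀ u hu_nonneg s' hs'.1 τ' hτ'.1) hs hτ.1 hτ.2)
      (hp₂_nonneg s hs τ hτ.1 q hq)) _
  have hV : V x ≤ _ := integral_le_integral_mul_exp_integral hx (by fun_prop) (by fun_prop)
    (by fun_prop) (fun t ht ↦ integral_nonneg hy fun τ hτ ↦ hinner₀ p₁ hp₁_nonneg t ht.1 τ hτ.1)
    (fun t ht ↦ integral_nonneg hy fun τ hτ ↦ hinner₀ p₂ hp₂_nonneg t ht.1 τ hτ.1) fun t ht ↦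
      integral_integral_mul_le_of_le_add_mul hy hab (by fun_prop) (by fun_prop) (by fun_prop)
        (by fun_prop) (fun τ hτ q hq ↦ hf_nonneg t ht.1 τ hτ.1 q hq) (hbound t ht.1)
  calc u x y z ≤ p₁ x y z + p₂ x y z * V x := hbound x hx y ⟨hy, le_rfl⟩ z hz
    _ ≤ _ := by
      rw [mul_assoc]
      exact add_le_add_right (mul_le_mul_of_nonneg_left hV (hp₂_nonneg x hx y hy z hz)) _
end

section
/- Let a, b be natural numbers with a ≤ b, and let u, p₁, p₂, f : ℕ × ℕ × ℕ → ℝ be nonnegative functions. Suppose that for all x, y ∈ ℕ and all z with a ≤ z ≤ b one has u(x,y,z) ≤ p₁(x,y,z) + p₂(x,y,z) · Σ_{s=0}^{x-1} Σ_{τ=0}^{y-1} Σ_{q=a}^{b} f(s,τ,q) u(s,τ,q). Then for all x, y ∈ ℕ and all z with a ≤ z ≤ b one has u(x,y,z) ≤ p₁(x,y,z) + p₂(x,y,z) · C(x,y) · ∏_{s=0}^{x-1} (1 + Q(s,y)), where Q(s,y) = Σ_{τ=0}^{y-1} Σ_{q=a}^{b} f(s,τ,q) p₂(s,τ,q) and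 C(x,y) = Σ_{s=0}^{x-1} Σ_{τ=0}^{y-1} Σ_{q=a}^{b} f(s,τ,q) p₁(s,τ,q). -/
/-!
Put `V x y = ∑_{s<x} ∑_{τ<y} ∑_{q=a}^{b} f u`. Since `V x τ ≤ V x y` for `τ < y`, the hypothesis
gives, summed against `f` over row `x`, the linear recursion `V (x+1) y ≤ (1 + Q x y) V x y + c x y`
with `c x y = ∑_{τ<y} ∑_q f p₁`. The discrete Gronwall inequality for such recursions yields
`V x y ≤ C x y ∏_{s<x} (1 + Q s y)`, which is then fed back into the hypothesis.
-/

open Finset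

theorem le_sum_mul_prod_of_le_one_add_mul_add {R : Type*} [CommSemiring R] [PartialOrder R]
    [IsOrderedRing R] {v c q : ℕ → R} (hv₀ : v 0 ≤ 0) (hc : ∀ n, 0 ≤ c n) (hq : ∀ n, 0 ≤ q n)
    (hv : ∀ n, v (n + 1) ≤ (1 + q n) * v n + c n) (n : ℕ) :
    v n ≤ (∑ i ∈ range n, c i) * ∏ i ∈ range n, (1 + q i) := by
  induction n with
  | zero => simpa using hv₀
  | succ n ih =>
    have hq₁ : 1 ≤ 1 + q n := le_add_of_nonneg_right (hq n)
    have hP : 1 ≤ (∏ i ∈ range n, (1 + q i)) * (1 + q n) :=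
      one_le_mul_of_one_le_of_one_le (one_le_prod fun i _ => le_add_of_nonneg_right (hq i)) hq₁
    rw [sum_range_succ, prod_range_succ]
    calc v (n + 1) ≤ (1 + q n) * v n + c n := hv n
      _ ≤ (1 + q n) * ((∑ i ∈ range n, c i) * ∏ i ∈ range n, (1 + q i))
            + c n * ((∏ i ∈ range n, (1 + q i)) * (1 + q n)) := by
        gcongr
        · exact zero_le_one.trans hq₁
        · exact le_mul_of_one_le_right (hc n) hP
      _ = _ := by ring

section TripleSum

variable (a b : ℕ)

def rowSum (g : ℕ → ℕ → ℕ → ℝ) (s y : ℕ) : ℝ :=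
  ∑ τ ∈ range y, ∑ q ∈ Icc a b, g s τ q

def tripleSum (g : ℕ → ℕ → ℕ → ℝ) (x y : ℕ) : ℝ :=
  ∑ s ∈ range x, rowSum a b g s y

variable {a b} {g : ℕ → ℕ → ℕ → ℝ}

theorem rowSum_nonneg (hg : ∀ s τ q, 0 ≤ g s τ q) (s y : ℕ) : 0 ≤ rowSum a b g s y :=
  sum_nonneg fun _ _ => sum_nonneg fun _ _ => hg _ _ _

theorem tripleSum_succ (x y : ℕ) :
    tripleSum a b g (x + 1) y = tripleSum a b g x y + rowSum a b g x y :=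
  sum_range_succ _ _

theorem tripleSum_mono_right (hg : ∀ s τ q, 0 ≤ g s τ q) (x : ℕ) :
    Monotone (tripleSum a b g x) := fun _ _ hy =>
  sum_le_sum fun _ _ => sum_le_sum_of_subset_of_nonneg (range_subset_range.2 hy)
    fun _ _ _ => sum_nonneg fun _ _ => hg _ _ _

end TripleSum

section SumInequality

variable {a b : ℕ} {u p₁ p₂ f : ℕ → ℕ → ℕ → ℝ}
  (hu : ∀ x y z, 0 ≤ u x y z) (hp₁ : ∀ x y z, 0 ≤ p₁ x y z) (hp₂ : ∀ x y z, 0 ≤ p₂ x y z)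
  (hf : ∀ x y z, 0 ≤ f x y z)
  (hineq : ∀ x y z, a ≤ z → z ≤ b →
    u x y z ≤ p₁ x y z + p₂ x y z * tripleSum a b (fun s τ q => f s τ q * u s τ q) x y)
include hu hp₂ hf hineq

theorem rowSum_le_add_mul_tripleSum (x y : ℕ) :
    rowSum a b (fun s τ q => f s τ q * u s τ q) x y ≤
      rowSum a b (fun s τ q => f s τ q * p₁ s τ q) x y +
        rowSum a b (fun s τ q => f s τ q * p₂ s τ q) x y *
          tripleSum a b (fun s τ q => f s τ q * u s τ q) x y := by
  set V := tripleSum a b (fun s τ q => f s τ q * u s τ q)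
  have hV : Monotone (V x) :=
    tripleSum_mono_right (fun s τ q => mul_nonneg (hf s τ q) (hu s τ q)) x
  calc rowSum a b (fun s τ q => f s τ q * u s τ q) x y
      ≤ ∑ τ ∈ range y, ∑ q ∈ Icc a b, (f x τ q * p₁ x τ q + f x τ q * p₂ x τ q * V x y) := by
        refine sum_le_sum fun τ hτ => sum_le_sum fun q hq => ?_
        obtain ⟨haq, hqb⟩ := mem_Icc.1 hq
        calc f x τ q * u x τ q ≤ f x τ q * (p₁ x τ q + p₂ x τ q * V x τ) :=
              mul_le_mul_of_nonneg_left (hineq x τ q haq hqb) (hf x τ q)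
          _ ≤ f x τ q * (p₁ x τ q + p₂ x τ q * V x y) := by
              gcongr ?_ * (_ + ?_ * ?_)
              exacts [hf x τ q, hp₂ x τ q, hV (mem_range.1 hτ).le]
          _ = _ := by ring
    _ = _ := by simp only [rowSum, sum_add_distrib, sum_mul]

include hp₁

theorem tripleSum_le_mul_prod (x y : ℕ) :
    tripleSum a b (fun s τ q => f s τ q * u s τ q) x y ≤
      tripleSum a b (fun s τ q => f s τ q * p₁ s τ q) x y *
        ∏ s ∈ range x, (1 + rowSum a b (fun s τ q => f s τ q * p₂ s τ q) s y) :=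
  le_sum_mul_prod_of_le_one_add_mul_add (v := fun x => tripleSum a b _ x y) (by simp [tripleSum])
    (fun _ => rowSum_nonneg (fun s τ q => mul_nonneg (hf s τ q) (hp₁ s τ q)) _ y)
    (fun _ => rowSum_nonneg (fun s τ q => mul_nonneg (hf s τ q) (hp₂ s τ q)) _ y)
    (fun n => by
      rw [tripleSum_succ]
      linarith [rowSum_le_add_mul_tripleSum hu hp₂ hf hineq n y])
    x

end SumInequality

theorem stmt_3_general (a b : ℕ) (u p₁ p₂ f : ℕ → ℕ → ℕ → ℝ)
    (hu_nonneg : ∀ x y z, 0 ≤ u x y z)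
    (hp₁_nonneg : ∀ x y z, 0 ≤ p₁ x y z)
    (hp₂_nonneg : ∀ x y z, 0 ≤ p₂ x y z)
    (hf_nonneg : ∀ x y z, 0 ≤ f x y z)
    (hineq : ∀ x y z, a ≤ z → z ≤ b →
      u x y z ≤ p₁ x y z + p₂ x y z *
        ∑ s ∈ Finset.range x, ∑ τ ∈ Finset.range y, ∑ q ∈ Finset.Icc a b,
          f s τ q * u s τ q) :
    ∀ x y z, a ≤ z → z ≤ b →
      u x y z ≤ p₁ x y z + p₂ x y z *
        (∑ s ∈ Finset.range x, ∑ τ ∈ Finset.range y, ∑ q ∈ Finset.Icc a b,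
          f s τ q * p₁ s τ q) *
        ∏ s ∈ Finset.range x,
          (1 + ∑ τ ∈ Finset.range y, ∑ q ∈ Finset.Icc a b,
            f s τ q * p₂ s τ q) := by
  intro x y z haz hzb
  calc u x y z ≤ p₁ x y z + p₂ x y z * tripleSum a b (fun s τ q => f s τ q * u s τ q) x y :=
        hineq x y z haz hzb
    _ ≤ _ := by
        rw [mul_assoc]
        gcongr ?_ + ?_ * ?_
        exacts [le_rfl, hp₂_nonneg x y z,
          tripleSum_le_mul_prod hu_nonneg hp₁_nonneg hp₂_nonneg hf_nonneg hineq x y]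

/-- Discrete (𝕋₁ = 𝕋₂ = ℤ, restricted to ℕ with base points 0) case of the
paper's main Theorem 2.1: a Gronwall-type estimate for a sum inequality in
three variables, the third variable ranging over the integers `a, …, b`. -/
theorem stmt_3 (a b : ℕ) (hab : a ≤ b) (u p₁ p₂ f : ℕ → ℕ → ℕ → ℝ)
    (hu_nonneg : ∀ x y z, 0 ≤ u x y z)
    (hp₁_nonneg : ∀ x y z, 0 ≤ p₁ x y z)
    (hp₂_nonneg : ∀ x y z, 0 ≤ p₂ x y z)
    (hf_nonneg : ∀ x y z, 0 ≤ f x y z)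
    (hineq : ∀ x y z, a ≤ z → z ≤ b →
      u x y z ≤ p₁ x y z + p₂ x y z *
        ∑ s ∈ Finset.range x, ∑ τ ∈ Finset.range y, ∑ q ∈ Finset.Icc a b,
          f s τ q * u s τ q) :
    ∀ x y z, a ≤ z → z ≤ b →
      u x y z ≤ p₁ x y z + p₂ x y z *
        (∑ s ∈ Finset.range x, ∑ τ ∈ Finset.range y, ∑ q ∈ Finset.Icc a b,
          f s τ q * p₁ s τ q) *
        ∏ s ∈ Finset.range x,
          (1 + ∑ τ ∈ Finset.range y, ∑ q ∈ Finset.Icc a b,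
            f s τ q * p₂ s τ q) :=
  stmt_3_general a b u p₁ p₂ f hu_nonneg hp₁_nonneg hp₂_nonneg hf_nonneg hineq
end

section
/- Let x₀, y₀, a, b be real numbers with a ≤ b, and let H = [x₀,∞) × [y₀,∞) × [a,b]. Let g : ℝ³ → ℝ and F : ℝ³ × ℝ³ × ℝ → ℝ be continuous, and let r, f : ℝ³ → ℝ be continuous and nonnegative on H, with |F(x,y,z,s,t,q,w)| ≤ r(x,y,z) · f(s,t,q) · |w| for all (x,y,z), (s,t,q) ∈ H and all w ∈ ℝ. Let u : ℝ³ → ℝ be continuous and satisfy, for all (x,y,z) ∈ H, the integral equation u(x,y,z) = g(x,y,z) + ∫_{x₀}^{x} ∫_{y₀}^{y} ∫_{a}^{b} F(x,y,z,s,t,q,u(s,t,q)) dq dt ds. Then for all (x,y,z) ∈ H one has |u(x,y,z)| ≤ |g(x,y,z)| + r(x,y,z) · C₂(x,y) · exp(∫_{x₀}^{x} Q₂(s,y) ds), where C₂(x,y) = ∫_{x₀}^{x} ∫_{y₀}^{y} ∫_{a}^{b} f(s,t,q) |g(s,t,q)| dq dt ds and Q₂(s,y) = ∫_{y₀}^{y}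 ∫_{a}^{b} f(s,t,q) r(s,t,q) dq dt. -/
/-!
Fix `y` and put `Φ(s) = ∫_{x₀}^{s} ∫_{y₀}^{y} ∫_a^b f |u|`. The kernel bound turns the integral
equation into `|u(s,t,q)| ≤ |g(s,t,q)| + r(s,t,q) Φ(s)` for `t ≤ y`; multiplying by `f` and
integrating over `t` and `q` gives the linear differential inequality `Φ' ≤ c + Q Φ` with
`c = ∫∫ f |g|` and `Q = ∫∫ f r`, and Gronwall's lemma bounds `Φ(x)` by
`(∫_{x₀}^{x} c) · exp (∫_{x₀}^{x} Q)`.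
-/

open Real Set intervalIntegral

theorem integral_le_mul_exp_integral_of_le_add_mul_integral {ψ c Q : ℝ → ℝ} {x₀ x : ℝ}
    (hx : x₀ ≤ x) (hψ : Continuous ψ) (hc : Continuous c) (hQ : Continuous Q)
    (hc0 : ∀ s ∈ Icc x₀ x, 0 ≤ c s) (hQ0 : ∀ s ∈ Icc x₀ x, 0 ≤ Q s)
    (h : ∀ s ∈ Icc x₀ x, ψ s ≤ c s + Q s * ∫ τ in x₀..s, ψ τ) :
    ∫ s in x₀..x, ψ s ≤ (∫ s in x₀..x, c s) * exp (∫ s in x₀..x, Q s) := by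
  set Φ : ℝ → ℝ := fun w => ∫ s in x₀..w, ψ s
  set E : ℝ → ℝ := fun w => exp (-∫ s in x₀..w, Q s)
  set G : ℝ → ℝ := fun w => (∫ s in x₀..w, c s) - Φ w * E w
  have hG : ∀ w, HasDerivAt G (c w - (ψ w * E w + Φ w * (E w * -Q w))) w := fun w =>
    (hc.integral_hasStrictDerivAt x₀ w).hasDerivAt.sub
      ((hψ.integral_hasStrictDerivAt x₀ w).hasDerivAt.mul
        (hQ.integral_hasStrictDerivAt x₀ w).hasDerivAt.neg.exp)
  have hG_mono : MonotoneOn G (Icc x₀ x) := by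
    refine monotoneOn_of_hasDerivWithinAt_nonneg (convex_Icc x₀ x)
      (fun w _ => (hG w).continuousAt.continuousWithinAt) (fun w _ => (hG w).hasDerivWithinAt)
      fun w hw => ?_
    rw [interior_Icc] at hw
    have hw' : w ∈ Icc x₀ x := Ioo_subset_Icc_self hw
    have hE1 : E w ≤ 1 := exp_le_one_iff.2 <| neg_nonpos.2 <|
      integral_nonneg hw'.1 fun s hs => hQ0 s ⟨hs.1, hs.2.trans hw'.2⟩
    have hψE := mul_le_mul_of_nonneg_right (h w hw') (show 0 ≤ E w from (exp_pos _).le)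
    -- `G' w = c w * (1 - E w) + E w * (c w + Q w * Φ w - ψ w)`
    nlinarith [mul_le_mul_of_nonneg_left hE1 (hc0 w hw')]
  have hG_nonneg : 0 ≤ G x := by
    simpa [G, Φ] using hG_mono (left_mem_Icc.2 hx) (right_mem_Icc.2 hx) hx
  calc Φ x = Φ x * E x * exp (∫ s in x₀..x, Q s) := by
        simp only [E, mul_assoc, ← exp_add, neg_add_cancel, exp_zero, mul_one]
    _ ≤ (∫ s in x₀..x, c s) * exp (∫ s in x₀..x, Q s) := by gcongr; linarith

section IteratedIntegrals

variable {x₀ x c d a b : ℝ} {k l m : ℝ → ℝ → ℝ → ℝ}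

theorem continuous_integral_last (hk : Continuous fun p : ℝ × ℝ × ℝ => k p.1 p.2.1 p.2.2)
    (a b : ℝ) : Continuous fun st : ℝ × ℝ => ∫ q in a..b, k st.1 st.2 q :=
  continuous_parametric_intervalIntegral_of_continuous' (f := fun (st : ℝ × ℝ) q => k st.1 st.2 q)
    (hk.comp (by fun_prop : Continuous fun p : (ℝ × ℝ) × ℝ => (p.1.1, p.1.2, p.2))) a b

theorem continuous_integral_integral_last_two
    (hk : Continuous fun p : ℝ × ℝ × ℝ => k p.1 p.2.1 p.2.2) (c d a b : ℝ) :
    Continuous fun s => ∫ t in c..d, ∫ q in a..b, k s t q :=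
  continuous_parametric_intervalIntegral_of_continuous' (continuous_integral_last hk a b) c d

theorem intervalIntegrable_integral_last
    (hk : Continuous fun p : ℝ × ℝ × ℝ => k p.1 p.2.1 p.2.2) (s : ℝ) (c d a b : ℝ) :
    IntervalIntegrable (fun t => ∫ q in a..b, k s t q) MeasureTheory.volume c d :=
  ((continuous_integral_last hk a b).comp (Continuous.prodMk_right s)).intervalIntegrable c d

theorem intervalIntegrable_slice (hk : Continuous fun p : ℝ × ℝ × ℝ => k p.1 p.2.1 p.2.2)
    (s t a b : ℝ) : IntervalIntegrable (fun q => k s t q) MeasureTheory.volume a b :=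
  (hk.comp (by fun_prop : Continuous fun q : ℝ => (s, t, q))).intervalIntegrable a b

theorem integral_integral_nonneg {k : ℝ → ℝ → ℝ} (hcd : c ≤ d) (hab : a ≤ b)
    (h : ∀ t ∈ Icc c d, ∀ q ∈ Icc a b, 0 ≤ k t q) :
    0 ≤ ∫ t in c..d, ∫ q in a..b, k t q :=
  integral_nonneg hcd fun t ht => integral_nonneg hab (h t ht)

theorem integral_integral_mono_on (hcd : c ≤ d) (hab : a ≤ b)
    (hk : Continuous fun p : ℝ × ℝ × ℝ => k p.1 p.2.1 p.2.2)
    (hl : Continuous fun p : ℝ × ℝ × ℝ => l p.1 p.2.1 p.2.2) (s : ℝ)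
    (h : ∀ t ∈ Icc c d, ∀ q ∈ Icc a b, k s t q ≤ l s t q) :
    ∫ t in c..d, ∫ q in a..b, k s t q ≤ ∫ t in c..d, ∫ q in a..b, l s t q :=
  integral_mono_on hcd (intervalIntegrable_integral_last hk s c d a b)
    (intervalIntegrable_integral_last hl s c d a b) fun t ht =>
      integral_mono_on hab (intervalIntegrable_slice hk s t a b)
        (intervalIntegrable_slice hl s t a b) (h t ht)

theorem integral_integral_integral_mono_on (hx : x₀ ≤ x) (hcd : c ≤ d) (hab : a ≤ b)
    (hk : Continuous fun p : ℝ × ℝ × ℝ => k p.1 p.2.1 p.2.2)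
    (hl : Continuous fun p : ℝ × ℝ × ℝ => l p.1 p.2.1 p.2.2)
    (h : ∀ s ∈ Icc x₀ x, ∀ t ∈ Icc c d, ∀ q ∈ Icc a b, k s t q ≤ l s t q) :
    ∫ s in x₀..x, ∫ t in c..d, ∫ q in a..b, k s t q ≤
      ∫ s in x₀..x, ∫ t in c..d, ∫ q in a..b, l s t q :=
  integral_mono_on hx ((continuous_integral_integral_last_two hk c d a b).intervalIntegrable _ _)
    ((continuous_integral_integral_last_two hl c d a b).intervalIntegrable _ _) fun s hs =>
      integral_integral_mono_on hcd hab hk hl s (h s hs)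

theorem abs_integral_integral_integral_le (hx : x₀ ≤ x) (hcd : c ≤ d) (hab : a ≤ b)
    (hk : Continuous fun p : ℝ × ℝ × ℝ => k p.1 p.2.1 p.2.2)
    (hl : Continuous fun p : ℝ × ℝ × ℝ => l p.1 p.2.1 p.2.2)
    (h : ∀ s ∈ Icc x₀ x, ∀ t ∈ Icc c d, ∀ q ∈ Icc a b, |k s t q| ≤ l s t q) :
    |∫ s in x₀..x, ∫ t in c..d, ∫ q in a..b, k s t q| ≤
      ∫ s in x₀..x, ∫ t in c..d, ∫ q in a..b, l s t q := by
  refine abs_le.2 ⟨?_, integral_integral_integral_mono_on hx hcd hab hk hl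
    fun s hs t ht q hq => (le_abs_self _).trans (h s hs t ht q hq)⟩
  simpa only [integral_neg] using integral_integral_integral_mono_on (k := fun s t q => -l s t q)
    hx hcd hab hl.neg hk fun s hs t ht q hq => neg_le_of_abs_le (h s hs t ht q hq)

theorem integral_integral_le_add_mul {C : ℝ} (hcd : c ≤ d) (hab : a ≤ b)
    (hk : Continuous fun p : ℝ × ℝ × ℝ => k p.1 p.2.1 p.2.2)
    (hl : Continuous fun p : ℝ × ℝ × ℝ => l p.1 p.2.1 p.2.2)
    (hm : Continuous fun p : ℝ × ℝ × ℝ => m p.1 p.2.1 p.2.2) (s : ℝ)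
    (h : ∀ t ∈ Icc c d, ∀ q ∈ Icc a b, k s t q ≤ l s t q + m s t q * C) :
    ∫ t in c..d, ∫ q in a..b, k s t q ≤
      (∫ t in c..d, ∫ q in a..b, l s t q) + (∫ t in c..d, ∫ q in a..b, m s t q) * C := by
  have hlm : Continuous fun p : ℝ × ℝ × ℝ =>
      l p.1 p.2.1 p.2.2 + m p.1 p.2.1 p.2.2 * C := hl.add (hm.mul continuous_const)
  refine (integral_integral_mono_on (l := fun s t q => l s t q + m s t q * C)
    hcd hab hk hlm s h).trans_eq ?_
  have inner : ∀ t, ∫ q in a..b, l s t q + m s t q * C =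
      (∫ q in a..b, l s t q) + (∫ q in a..b, m s t q) * C := fun t => by
    rw [integral_add (intervalIntegrable_slice hl s t a b)
      ((intervalIntegrable_slice hm s t a b).mul_const C), integral_mul_const]
  simp only [inner]
  rw [integral_add (intervalIntegrable_integral_last hl s c d a b)
    ((intervalIntegrable_integral_last hm s c d a b).mul_const C), integral_mul_const]

theorem integral_integral_integral_mono_middle {y : ℝ} (hx : x₀ ≤ x) (hd : d ∈ Icc c y)
    (hab : a ≤ b) (hk : Continuous fun p : ℝ × ℝ × ℝ => k p.1 p.2.1 p.2.2)
    (h : ∀ s ∈ Icc x₀ x, ∀ t ∈ Icc c y, ∀ q ∈ Icc a b, 0 ≤ k s t q) :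
    ∫ s in x₀..x, ∫ t in c..d, ∫ q in a..b, k s t q ≤
      ∫ s in x₀..x, ∫ t in c..y, ∫ q in a..b, k s t q := by
  refine integral_mono_on hx
    ((continuous_integral_integral_last_two hk c d a b).intervalIntegrable _ _)
    ((continuous_integral_integral_last_two hk c y a b).intervalIntegrable _ _) fun s hs => ?_
  refine integral_mono_interval le_rfl hd.1 hd.2 ?_ (intervalIntegrable_integral_last hk s c y a b)
  filter_upwards [MeasureTheory.ae_restrict_mem measurableSet_Ioc] with t ht
  exact integral_nonneg hab (h s hs t (Ioc_subset_Icc_self ht))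

theorem abs_integral_integral_integral_le_mul {y R : ℝ} (hR : 0 ≤ R) (hx : x₀ ≤ x)
    (hd : d ∈ Icc c y) (hab : a ≤ b) (hk : Continuous fun p : ℝ × ℝ × ℝ => k p.1 p.2.1 p.2.2)
    (hl : Continuous fun p : ℝ × ℝ × ℝ => l p.1 p.2.1 p.2.2)
    (hl0 : ∀ s ∈ Icc x₀ x, ∀ t ∈ Icc c y, ∀ q ∈ Icc a b, 0 ≤ l s t q)
    (h : ∀ s ∈ Icc x₀ x, ∀ t ∈ Icc c d, ∀ q ∈ Icc a b, |k s t q| ≤ R * l s t q) :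
    |∫ s in x₀..x, ∫ t in c..d, ∫ q in a..b, k s t q| ≤
      R * ∫ s in x₀..x, ∫ t in c..y, ∫ q in a..b, l s t q :=
  calc _ ≤ ∫ s in x₀..x, ∫ t in c..d, ∫ q in a..b, R * l s t q :=
        abs_integral_integral_integral_le hx hd.1 hab hk (continuous_const.mul hl) h
    _ = R * ∫ s in x₀..x, ∫ t in c..d, ∫ q in a..b, l s t q := by
        simp only [integral_const_mul]
    _ ≤ _ := by
        gcongr
        exact integral_integral_integral_mono_middle hx hd hab hl hl0

end IteratedIntegrals

/-- Continuous (𝕋 = ℝ) case of the paper's Theorem 3.1: an a priori bound on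
solutions of a Volterra-type integral equation in three variables on
`H = [x₀,∞) × [y₀,∞) × [a,b]`. -/
theorem stmt_4 (x₀ y₀ a b : ℝ) (hab : a ≤ b)
    (g : ℝ → ℝ → ℝ → ℝ) (F : ℝ → ℝ → ℝ → ℝ → ℝ → ℝ → ℝ → ℝ)
    (r f : ℝ → ℝ → ℝ → ℝ) (u : ℝ → ℝ → ℝ → ℝ)
    (hg_cont : Continuous (fun p : ℝ × ℝ × ℝ => g p.1 p.2.1 p.2.2))
    (hF_cont : Continuous (fun p : (ℝ × ℝ × ℝ) × (ℝ × ℝ × ℝ) × ℝ =>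
      F p.1.1 p.1.2.1 p.1.2.2 p.2.1.1 p.2.1.2.1 p.2.1.2.2 p.2.2))
    (hr_cont : Continuous (fun p : ℝ × ℝ × ℝ => r p.1 p.2.1 p.2.2))
    (hf_cont : Continuous (fun p : ℝ × ℝ × ℝ => f p.1 p.2.1 p.2.2))
    (hu_cont : Continuous (fun p : ℝ × ℝ × ℝ => u p.1 p.2.1 p.2.2))
    (hr_nonneg : ∀ x, x₀ ≤ x → ∀ y, y₀ ≤ y → ∀ z ∈ Set.Icc a b, 0 ≤ r x y z)
    (hf_nonneg : ∀ x, x₀ ≤ x → ∀ y, y₀ ≤ y → ∀ z ∈ Set.Icc a b, 0 ≤ f x y z)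
    (hF_bound : ∀ x, x₀ ≤ x → ∀ y, y₀ ≤ y → ∀ z ∈ Set.Icc a b,
      ∀ s, x₀ ≤ s → ∀ t, y₀ ≤ t → ∀ q ∈ Set.Icc a b, ∀ w : ℝ,
        |F x y z s t q w| ≤ r x y z * f s t q * |w|)
    (heq : ∀ x, x₀ ≤ x → ∀ y, y₀ ≤ y → ∀ z ∈ Set.Icc a b,
      u x y z = g x y z +
        ∫ s in x₀..x, ∫ t in y₀..y, ∫ q in a..b, F x y z s t q (u s t q)) :
    ∀ x, x₀ ≤ x → ∀ y, y₀ ≤ y → ∀ z ∈ Set.Icc a b,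
      |u x y z| ≤ |g x y z| + r x y z *
        (∫ s in x₀..x, ∫ t in y₀..y, ∫ q in a..b, f s t q * |g s t q|) *
        Real.exp (∫ s in x₀..x, ∫ t in y₀..y, ∫ q in a..b,
          f s t q * r s t q) := by
  intro x hx y hy z hz
  have hfu : Continuous fun p : ℝ × ℝ × ℝ => f p.1 p.2.1 p.2.2 * |u p.1 p.2.1 p.2.2| :=
    hf_cont.mul hu_cont.abs
  have hfg : Continuous fun p : ℝ × ℝ × ℝ => f p.1 p.2.1 p.2.2 * |g p.1 p.2.1 p.2.2| :=
    hf_cont.mul hg_cont.abs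
  have hfr : Continuous fun p : ℝ × ℝ × ℝ => f p.1 p.2.1 p.2.2 * r p.1 p.2.1 p.2.2 :=
    hf_cont.mul hr_cont
  have key : ∀ s, x₀ ≤ s → ∀ t ∈ Icc y₀ y, ∀ q ∈ Icc a b, |u s t q| ≤ |g s t q| +
      r s t q * ∫ s' in x₀..s, ∫ t' in y₀..y, ∫ q' in a..b, f s' t' q' * |u s' t' q'| := by
    intro s hs t ht q hq
    rw [heq s hs t ht.1 q hq]
    grw [abs_add_le]
    gcongr
    exact abs_integral_integral_integral_le_mul
      (k := fun s' t' q' => F s t q s' t' q' (u s' t' q')) (hr_nonneg s hs t ht.1 q hq) hs ht hab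
      (hF_cont.comp (continuous_const.prodMk (continuous_id.prodMk hu_cont) :
        Continuous fun p : ℝ × ℝ × ℝ => ((s, t, q), p, u p.1 p.2.1 p.2.2))) hfu
      (fun s' hs' t' ht' q' hq' =>
        mul_nonneg (hf_nonneg s' hs'.1 t' ht'.1 q' hq') (abs_nonneg _))
      fun s' hs' t' ht' q' hq' => (hF_bound s hs t ht.1 q hq s' hs'.1 t' ht'.1 q' hq'
        (u s' t' q')).trans_eq (mul_assoc _ _ _)
  have gronwall := integral_le_mul_exp_integral_of_le_add_mul_integral hx
    (continuous_integral_integral_last_two hfu y₀ y a b)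
    (continuous_integral_integral_last_two hfg y₀ y a b)
    (continuous_integral_integral_last_two hfr y₀ y a b)
    (fun s hs => integral_integral_nonneg hy hab fun t ht q hq =>
      mul_nonneg (hf_nonneg s hs.1 t ht.1 q hq) (abs_nonneg _))
    (fun s hs => integral_integral_nonneg hy hab fun t ht q hq =>
      mul_nonneg (hf_nonneg s hs.1 t ht.1 q hq) (hr_nonneg s hs.1 t ht.1 q hq))
    fun s hs => integral_integral_le_add_mul (k := fun s t q => f s t q * |u s t q|)
      (l := fun s t q => f s t q * |g s t q|) (m := fun s t q => f s t q * r s t q)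
      hy hab hfu hfg hfr s fun t ht q hq => by
      have := mul_le_mul_of_nonneg_left (key s hs.1 t ht q hq) (hf_nonneg s hs.1 t ht.1 q hq)
      linarith
  calc |u x y z| ≤ _ := key x hx y ⟨hy, le_rfl⟩ z hz
    _ ≤ _ := by
      rw [mul_assoc]
      gcongr
      exact hr_nonneg x hx y hy z hz
end

section
/- Let a, b be natural numbers with a ≤ b. Let g : ℕ³ → ℝ, F : ℕ³ × ℕ³ × ℝ → ℝ, and nonnegative r, f : ℕ³ → ℝ satisfy |F(x,y,z,s,t,q,w)| ≤ r(x,y,z) · f(s,t,q) · |w| for all arguments with a ≤ z ≤ b, a ≤ q ≤ b, and all w ∈ ℝ. Let u : ℕ³ → ℝ satisfy, for all x, y ∈ ℕ and a ≤ z ≤ b, u(x,y,z) = g(x,y,z) + Σ_{s=0}^{x-1} Σ_{t=0}^{y-1} Σ_{q=a}^{b} F(x,y,z,s,t,q,u(s,t,q)). Then for all x, y ∈ ℕ and a ≤ z ≤ b one has |u(x,y,z)| ≤ |g(x,y,z)| + r(x,y,z) · C₂(x,y) · ∏_{s=0}^{x-1} (1 + Q₂(s,y)), where C₂(x,y) =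 Σ_{s=0}^{x-1} Σ_{t=0}^{y-1} Σ_{q=a}^{b} f(s,t,q) |g(s,t,q)| and Q₂(s,y) = Σ_{t=0}^{y-1} Σ_{q=a}^{b} f(s,t,q) r(s,t,q). -/
/-!
Put `A x y = ∑_{s<x} ∑_{t<y} ∑_{q=a}^{b} f(s,t,q) |u(s,t,q)|`. Taking absolute values in the
equation gives `|u(x,y,z)| ≤ |g(x,y,z)| + r(x,y,z) A(x,y)`. Feeding this back into `A` and using
that `A` is monotone in `y` yields the one-variable recursion
`A(x,y) ≤ C₂(x,y) + ∑_{s<x} Q₂(s,y) A(s,y)`, and a discrete Gronwall inequality (with `C₂`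
monotone in `x`) bounds `A(x,y)` by `C₂(x,y) ∏_{s<x} (1 + Q₂(s,y))`.
-/

open Finset

theorem prod_range_one_add_eq {R : Type*} [CommRing R] (Q : ℕ → R) (x : ℕ) :
    ∏ s ∈ range x, (1 + Q s) = 1 + ∑ s ∈ range x, Q s * ∏ t ∈ range s, (1 + Q t) := by
  induction x with
  | zero => simp
  | succ n ih => rw [prod_range_succ, sum_range_succ, ih]; ring

theorem le_mul_prod_range_one_add_of_le_add_sum {R : Type*} [CommRing R] [PartialOrder R]
    [IsOrderedRing R] {C Q A : ℕ → R} (hC : Monotone C) (hQ : ∀ s, 0 ≤ Q s)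
    (hA : ∀ x, A x ≤ C x + ∑ s ∈ range x, Q s * A s) (x : ℕ) :
    A x ≤ C x * ∏ s ∈ range x, (1 + Q s) := by
  induction x using Nat.strong_induction_on with
  | _ x ih =>
    have hsum : ∑ s ∈ range x, Q s * A s ≤
        ∑ s ∈ range x, Q s * (C x * ∏ t ∈ range s, (1 + Q t)) := by
      refine sum_le_sum fun s hs => mul_le_mul_of_nonneg_left ?_ (hQ s)
      have hsx := mem_range.mp hs
      have hprod : 0 ≤ ∏ t ∈ range s, (1 + Q t) :=
        prod_nonneg fun t _ => add_nonneg zero_le_one (hQ t)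
      exact (ih s hsx).trans (mul_le_mul_of_nonneg_right (hC hsx.le) hprod)
    calc A x ≤ C x + ∑ s ∈ range x, Q s * A s := hA x
      _ ≤ C x + ∑ s ∈ range x, Q s * (C x * ∏ t ∈ range s, (1 + Q t)) := by gcongr
      _ = C x * ∏ s ∈ range x, (1 + Q s) := by
        rw [prod_range_one_add_eq, mul_add, mul_one, mul_sum]
        congr 1
        exact sum_congr rfl fun s _ => by ring

def boxSum (a b x y : ℕ) (h : ℕ → ℕ → ℕ → ℝ) : ℝ :=
  ∑ s ∈ range x, ∑ t ∈ range y, ∑ q ∈ Icc a b, h s t q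

namespace boxSum

variable {a b : ℕ} {h : ℕ → ℕ → ℕ → ℝ}

theorem mono_left (hh : ∀ s t q, 0 ≤ h s t q) (y : ℕ) : Monotone fun x ↦ boxSum a b x y h :=
  fun _ _ hx ↦ sum_le_sum_of_subset_of_nonneg (range_subset_range.mpr hx) fun s _ _ ↦
    sum_nonneg fun t _ ↦ sum_nonneg fun q _ ↦ hh s t q

theorem mono_right (hh : ∀ s t q, 0 ≤ h s t q) (x : ℕ) : Monotone (boxSum a b x · h) :=
  fun _ _ hy ↦ sum_le_sum fun s _ ↦ sum_le_sum_of_subset_of_nonneg (range_subset_range.mpr hy)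
    fun t _ _ ↦ sum_nonneg fun q _ ↦ hh s t q

end boxSum

section SumEquation

variable {a b : ℕ} {g r f u : ℕ → ℕ → ℕ → ℝ}

theorem abs_le_abs_add_mul_boxSum {x y : ℕ} {u₀ g₀ c : ℝ}
    {F : ℕ → ℕ → ℕ → ℝ → ℝ}
    (hF : ∀ s t q, a ≤ q → q ≤ b → ∀ w, |F s t q w| ≤ c * f s t q * |w|)
    (hu₀ : u₀ = g₀ +
      ∑ s ∈ range x, ∑ t ∈ range y, ∑ q ∈ Icc a b, F s t q (u s t q)) :
    |u₀| ≤ |g₀| + c * boxSum a b x y (fun s t q ↦ f s t q * |u s t q|) := by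
  rw [hu₀]
  refine (abs_add_le _ _).trans (add_le_add_right ?_ _)
  calc |∑ s ∈ range x, ∑ t ∈ range y, ∑ q ∈ Icc a b, F s t q (u s t q)|
      ≤ ∑ s ∈ range x, ∑ t ∈ range y, ∑ q ∈ Icc a b, |F s t q (u s t q)| := by
        refine (abs_sum_le_sum_abs _ _).trans (sum_le_sum fun s _ ↦ ?_)
        exact (abs_sum_le_sum_abs _ _).trans (sum_le_sum fun t _ ↦ abs_sum_le_sum_abs _ _)
    _ ≤ ∑ s ∈ range x, ∑ t ∈ range y, ∑ q ∈ Icc a b, c * (f s t q * |u s t q|) := by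
        gcongr with s _ t _ q hq
        rw [← mul_assoc]
        exact hF s t q (mem_Icc.mp hq).1 (mem_Icc.mp hq).2 _
    _ = c * boxSum a b x y (fun s t q ↦ f s t q * |u s t q|) := by
        simp only [boxSum, mul_sum]

theorem boxSum_le_add_sum_mul_boxSum (hr : ∀ x y z, 0 ≤ r x y z) (hf : ∀ x y z, 0 ≤ f x y z)
    (hu : ∀ x y z, a ≤ z → z ≤ b →
      |u x y z| ≤ |g x y z| + r x y z * boxSum a b x y (fun s t q ↦ f s t q * |u s t q|))
    (x y : ℕ) :
    boxSum a b x y (fun s t q ↦ f s t q * |u s t q|) ≤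
      boxSum a b x y (fun s t q ↦ f s t q * |g s t q|) +
        ∑ s ∈ range x, (∑ t ∈ range y, ∑ q ∈ Icc a b, f s t q * r s t q) *
          boxSum a b s y (fun s t q ↦ f s t q * |u s t q|) := by
  set A := fun s y ↦ boxSum a b s y (fun s t q ↦ f s t q * |u s t q|)
  have hA_mono : ∀ s, Monotone (A s) :=
    boxSum.mono_right fun s t q ↦ mul_nonneg (hf s t q) (abs_nonneg _)
  calc A x y
      ≤ boxSum a b x y (fun s t q ↦ f s t q * |g s t q| + f s t q * r s t q * A s y) := by
        refine sum_le_sum fun s _ ↦ sum_le_sum fun t ht ↦ sum_le_sum fun q hq ↦ ?_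
        obtain ⟨haq, hqb⟩ := mem_Icc.mp hq
        have hAt : A s t ≤ A s y := hA_mono s (mem_range.mp ht).le
        calc f s t q * |u s t q| ≤ f s t q * (|g s t q| + r s t q * A s y) := by
              refine mul_le_mul_of_nonneg_left ((hu s t q haq hqb).trans ?_) (hf s t q)
              exact add_le_add_right (mul_le_mul_of_nonneg_left hAt (hr s t q)) _
          _ = f s t q * |g s t q| + f s t q * r s t q * A s y := by ring
    _ = boxSum a b x y (fun s t q ↦ f s t q * |g s t q|) +
          ∑ s ∈ range x, (∑ t ∈ range y, ∑ q ∈ Icc a b, f s t q * r s t q) * A s y := by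
        simp only [boxSum, sum_add_distrib, sum_mul]

end SumEquation

theorem stmt_5_general (a b : ℕ)
    (g : ℕ → ℕ → ℕ → ℝ) (F : ℕ → ℕ → ℕ → ℕ → ℕ → ℕ → ℝ → ℝ)
    (r f : ℕ → ℕ → ℕ → ℝ) (u : ℕ → ℕ → ℕ → ℝ)
    (hr_nonneg : ∀ x y z, 0 ≤ r x y z)
    (hf_nonneg : ∀ x y z, 0 ≤ f x y z)
    (hF_bound : ∀ x y z s t q, a ≤ z → z ≤ b → a ≤ q → q ≤ b → ∀ w : ℝ,
      |F x y z s t q w| ≤ r x y z * f s t q * |w|)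
    (heq : ∀ x y z, a ≤ z → z ≤ b →
      u x y z = g x y z +
        ∑ s ∈ Finset.range x, ∑ t ∈ Finset.range y, ∑ q ∈ Finset.Icc a b,
          F x y z s t q (u s t q)) :
    ∀ x y z, a ≤ z → z ≤ b →
      |u x y z| ≤ |g x y z| + r x y z *
        (∑ s ∈ Finset.range x, ∑ t ∈ Finset.range y, ∑ q ∈ Finset.Icc a b,
          f s t q * |g s t q|) *
        ∏ s ∈ Finset.range x,
          (1 + ∑ t ∈ Finset.range y, ∑ q ∈ Finset.Icc a b,
            f s t q * r s t q) := by
  have hu : ∀ x y z, a ≤ z → z ≤ b →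
      |u x y z| ≤ |g x y z| + r x y z * boxSum a b x y (fun s t q ↦ f s t q * |u s t q|) :=
    fun x y z hz₁ hz₂ ↦ abs_le_abs_add_mul_boxSum
      (fun s t q ↦ hF_bound x y z s t q hz₁ hz₂) (heq x y z hz₁ hz₂)
  intro x y z hz₁ hz₂
  have hA := le_mul_prod_range_one_add_of_le_add_sum
    (boxSum.mono_left (fun s t q ↦ mul_nonneg (hf_nonneg s t q) (abs_nonneg _)) y)
    (fun s ↦ sum_nonneg fun t _ ↦ sum_nonneg fun q _ ↦
      mul_nonneg (hf_nonneg s t q) (hr_nonneg s t q))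
    (fun x ↦ boxSum_le_add_sum_mul_boxSum hr_nonneg hf_nonneg hu x y) x
  rw [mul_assoc]
  exact (hu x y z hz₁ hz₂).trans
    (add_le_add_right (mul_le_mul_of_nonneg_left hA (hr_nonneg x y z)) _)

/-- Discrete (𝕋 = ℤ, restricted to ℕ with base points 0) case of the paper's
Theorem 3.1: an a priori bound on solutions of a sum (Volterra-type) equation
in three variables, the third variable ranging over the integers `a, …, b`. -/
theorem stmt_5 (a b : ℕ) (hab : a ≤ b)
    (g : ℕ → ℕ → ℕ → ℝ) (F : ℕ → ℕ → ℕ → ℕ → ℕ → ℕ → ℝ → ℝ)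
    (r f : ℕ → ℕ → ℕ → ℝ) (u : ℕ → ℕ → ℕ → ℝ)
    (hr_nonneg : ∀ x y z, 0 ≤ r x y z)
    (hf_nonneg : ∀ x y z, 0 ≤ f x y z)
    (hF_bound : ∀ x y z s t q, a ≤ z → z ≤ b → a ≤ q → q ≤ b → ∀ w : ℝ,
      |F x y z s t q w| ≤ r x y z * f s t q * |w|)
    (heq : ∀ x y z, a ≤ z → z ≤ b →
      u x y z = g x y z +
        ∑ s ∈ Finset.range x, ∑ t ∈ Finset.range y, ∑ q ∈ Finset.Icc a b,
          F x y z s t q (u s t q)) :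
    ∀ x y z, a ≤ z → z ≤ b →
      |u x y z| ≤ |g x y z| + r x y z *
        (∑ s ∈ Finset.range x, ∑ t ∈ Finset.range y, ∑ q ∈ Finset.Icc a b,
          f s t q * |g s t q|) *
        ∏ s ∈ Finset.range x,
          (1 + ∑ t ∈ Finset.range y, ∑ q ∈ Finset.Icc a b,
            f s t q * r s t q) :=
  stmt_5_general a b g F r f u hr_nonneg hf_nonneg hF_bound heq
end

section
/- Let x₀, y₀, a, b be real numbers with a ≤ b, and let H = [x₀,∞) × [y₀,∞) × [a,b]. Let g : ℝ³ → ℝ and F : ℝ³ × ℝ³ × ℝ → ℝ be continuous, and let r, f : ℝ³ → ℝ be continuous and nonnegative on H, with the Lipschitz-type condition |F(x,y,z,s,t,q,w) − F(x,y,z,s,t,q,v)| ≤ r(x,y,z) · f(s,t,q) · |w − v| for all (x,y,z), (s,t,q) ∈ H and all w, v ∈ ℝ. Let u : ℝ³ → ℝ be continuous and satisfy, for all (x,y,z) ∈ H, u(x,y,z) = g(x,y,z) + ∫_{x₀}^{x} ∫_{y₀}^{y} ∫_{a}^{b} F(x,y,z,s,t,q,u(s,t,q)) dq dt ds. Define k(x,y,z)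 = ∫_{x₀}^{x} ∫_{y₀}^{y} ∫_{a}^{b} |F(x,y,z,s,t,q,g(s,t,q))| dq dt ds. Then for all (x,y,z) ∈ H one has |u(x,y,z) − g(x,y,z)| ≤ k(x,y,z) + r(x,y,z) · C₃(x,y) · exp(∫_{x₀}^{x} Q₂(s,y) ds), where C₃(x,y) = ∫_{x₀}^{x} ∫_{y₀}^{y} ∫_{a}^{b} f(s,t,q) k(s,t,q) dq dt ds and Q₂(s,y) = ∫_{y₀}^{y} ∫_{a}^{b} f(s,t,q) r(s,t,q) dq dt. -/
/-!
Write `m(x, y) = ∫_{x₀}^x ∫_{y₀}^y ∫_a^b f |u - g|`. Comparing `F(·, u)` with `F(·, g)` under the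
integral and using the Lipschitz condition gives `|u - g| ≤ k + r m` on `H`. Multiplying by `f`
and integrating, and using that `m` is nondecreasing in `y`, one gets for fixed `y` the linear
integral inequality `m(x', y) ≤ C₃(x, y) + ∫_{x₀}^{x'} Q₂(s, y) m(s, y) ds` for `x' ≤ x`. Gronwall's
inequality, proved by showing that `(C + ∫ p v) e^{-∫ p}` is antitone, then bounds `m(x, y)` by
`C₃(x, y) exp (∫ Q₂)`.
-/

open MeasureTheory Set intervalIntegral

section Continuity

variable {α : Type*} [TopologicalSpace α]

lemma continuous_parametric_integral_integral {K : α → ℝ → ℝ → ℝ}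
    (hK : Continuous fun p : α × ℝ × ℝ => K p.1 p.2.1 p.2.2) {Y : α → ℝ} (hY : Continuous Y)
    (y₀ a b : ℝ) : Continuous fun w => ∫ t in y₀..Y w, ∫ q in a..b, K w t q := by
  have hinner : Continuous fun p : α × ℝ => ∫ q in a..b, K p.1 p.2 q :=
    continuous_parametric_intervalIntegral_of_continuous' (f := fun (p : α × ℝ) q => K p.1 p.2 q)
      (hK.comp₃ continuous_fst.fst continuous_fst.snd continuous_snd) a b
  exact continuous_parametric_intervalIntegral_of_continuous
    (f := fun w t => ∫ q in a..b, K w t q) hinner hY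

lemma continuous_parametric_integral_integral_integral {K : α → ℝ → ℝ → ℝ → ℝ}
    (hK : Continuous fun p : α × ℝ × ℝ × ℝ => K p.1 p.2.1 p.2.2.1 p.2.2.2)
    {X Y : α → ℝ} (hX : Continuous X) (hY : Continuous Y) (x₀ y₀ a b : ℝ) :
    Continuous fun w => ∫ s in x₀..X w, ∫ t in y₀..Y w, ∫ q in a..b, K w s t q :=
  continuous_parametric_intervalIntegral_of_continuous
    (f := fun w s => ∫ t in y₀..Y w, ∫ q in a..b, K w s t q)
    (continuous_parametric_integral_integral (K := fun p t q => K p.1 p.2 t q)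
      (hK.comp₃ continuous_fst.fst continuous_fst.snd continuous_snd) (hY.comp continuous_fst)
      y₀ a b) hX

end Continuity

lemma le_mul_exp_integral_of_le_add_integral_mul {v p : ℝ → ℝ} {x₀ X C : ℝ} (hX : x₀ ≤ X)
    (hv : Continuous v) (hp : Continuous p) (hp0 : ∀ s ∈ Icc x₀ X, 0 ≤ p s)
    (h : ∀ s ∈ Icc x₀ X, v s ≤ C + ∫ τ in x₀..s, p τ * v τ) :
    v X ≤ C * Real.exp (∫ τ in x₀..X, p τ) := by
  set w : ℝ → ℝ := fun s => C + ∫ τ in x₀..s, p τ * v τ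
  set P : ℝ → ℝ := fun s => ∫ τ in x₀..s, p τ
  have hw : ∀ s, HasDerivAt w (p s * v s) s := fun s =>
    ((hp.mul hv).integral_hasStrictDerivAt x₀ s).hasDerivAt.const_add C
  have hP : ∀ s, HasDerivAt P (p s) s := fun s => (hp.integral_hasStrictDerivAt x₀ s).hasDerivAt
  have hφ : ∀ s, HasDerivAt (fun s => w s * Real.exp (-P s))
      (p s * (v s - w s) * Real.exp (-P s)) s := fun s =>
    ((hw s).mul (hP s).neg.exp).congr_deriv (by simp only [Pi.neg_apply]; ring)
  have hanti : AntitoneOn (fun s => w s * Real.exp (-P s)) (Icc x₀ X) := by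
    refine antitoneOn_of_hasDerivWithinAt_nonpos (convex_Icc x₀ X)
      (fun s _ => (hφ s).continuousAt.continuousWithinAt) (fun s _ => (hφ s).hasDerivWithinAt)
      fun s hs => ?_
    rw [interior_Icc] at hs
    have hvw := h s (Ioo_subset_Icc_self hs)
    have hps := hp0 s (Ioo_subset_Icc_self hs)
    exact mul_nonpos_of_nonpos_of_nonneg (mul_nonpos_of_nonneg_of_nonpos hps (by linarith))
      (Real.exp_pos _).le
  have hC : w X * Real.exp (-P X) ≤ C := by
    simpa [w, P] using hanti (left_mem_Icc.2 hX) (right_mem_Icc.2 hX) hX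
  calc v X ≤ w X := h X (right_mem_Icc.2 hX)
    _ = w X * Real.exp (-P X) * Real.exp (P X) := by rw [mul_assoc, ← Real.exp_add]; simp
    _ ≤ C * Real.exp (P X) := by gcongr

section IteratedIntegral

variable {x₀ x y₀ y a b : ℝ} {G G' : ℝ → ℝ → ℝ → ℝ}

lemma intervalIntegrable_integral_integral
    (hG : Continuous fun p : ℝ × ℝ × ℝ => G p.1 p.2.1 p.2.2) (c d : ℝ) :
    IntervalIntegrable (fun s => ∫ t in y₀..y, ∫ q in a..b, G s t q) volume c d :=
  (continuous_parametric_integral_integral hG continuous_const y₀ a b).intervalIntegrable c d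

lemma intervalIntegrable_integral
    (hG : Continuous fun p : ℝ × ℝ × ℝ => G p.1 p.2.1 p.2.2) (s c d : ℝ) :
    IntervalIntegrable (fun t => ∫ q in a..b, G s t q) volume c d :=
  (continuous_parametric_intervalIntegral_of_continuous' (f := fun t q => G s t q)
    (hG.comp₃ continuous_const continuous_fst continuous_snd) a b).intervalIntegrable c d

lemma intervalIntegrable_apply₃
    (hG : Continuous fun p : ℝ × ℝ × ℝ => G p.1 p.2.1 p.2.2) (s t c d : ℝ) :
    IntervalIntegrable (fun q => G s t q) volume c d :=
  (hG.comp₃ continuous_const continuous_const continuous_id).intervalIntegrable c d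

lemma iteratedIntegral_nonneg (hx : x₀ ≤ x) (hy : y₀ ≤ y) (hab : a ≤ b)
    (h : ∀ s ∈ Icc x₀ x, ∀ t ∈ Icc y₀ y, ∀ q ∈ Icc a b, 0 ≤ G s t q) :
    0 ≤ ∫ s in x₀..x, ∫ t in y₀..y, ∫ q in a..b, G s t q :=
  integral_nonneg hx fun s hs => integral_nonneg hy fun t ht =>
    integral_nonneg hab fun q hq => h s hs t ht q hq

lemma iteratedIntegral_mono (hx : x₀ ≤ x) (hy : y₀ ≤ y) (hab : a ≤ b)
    (hG : Continuous fun p : ℝ × ℝ × ℝ => G p.1 p.2.1 p.2.2)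
    (hG' : Continuous fun p : ℝ × ℝ × ℝ => G' p.1 p.2.1 p.2.2)
    (hle : ∀ s ∈ Icc x₀ x, ∀ t ∈ Icc y₀ y, ∀ q ∈ Icc a b, G s t q ≤ G' s t q) :
    ∫ s in x₀..x, ∫ t in y₀..y, ∫ q in a..b, G s t q ≤
      ∫ s in x₀..x, ∫ t in y₀..y, ∫ q in a..b, G' s t q :=
  integral_mono_on hx (intervalIntegrable_integral_integral hG _ _)
    (intervalIntegrable_integral_integral hG' _ _) fun s hs =>
  integral_mono_on hy (intervalIntegrable_integral hG _ _ _)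
    (intervalIntegrable_integral hG' _ _ _) fun t ht =>
  integral_mono_on hab (intervalIntegrable_apply₃ hG _ _ _ _)
    (intervalIntegrable_apply₃ hG' _ _ _ _) fun q hq => hle s hs t ht q hq

lemma iteratedIntegral_mono_of_le {x' y' : ℝ} (hx : x₀ ≤ x) (hxx' : x ≤ x') (hy : y₀ ≤ y)
    (hyy' : y ≤ y') (hab : a ≤ b) (hG : Continuous fun p : ℝ × ℝ × ℝ => G p.1 p.2.1 p.2.2)
    (h : ∀ s ∈ Icc x₀ x', ∀ t ∈ Icc y₀ y', ∀ q ∈ Icc a b, 0 ≤ G s t q) :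
    ∫ s in x₀..x, ∫ t in y₀..y, ∫ q in a..b, G s t q ≤
      ∫ s in x₀..x', ∫ t in y₀..y', ∫ q in a..b, G s t q := by
  have hinner : ∀ s ∈ Icc x₀ x', ∀ t ∈ Ioc y₀ y', 0 ≤ ∫ q in a..b, G s t q :=
    fun s hs t ht => integral_nonneg hab fun q hq => h s hs t (Ioc_subset_Icc_self ht) q hq
  calc ∫ s in x₀..x, ∫ t in y₀..y, ∫ q in a..b, G s t q
      ≤ ∫ s in x₀..x, ∫ t in y₀..y', ∫ q in a..b, G s t q :=
        integral_mono_on hx (intervalIntegrable_integral_integral hG _ _)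
          (intervalIntegrable_integral_integral hG _ _) fun s hs =>
        integral_mono_interval le_rfl hy hyy'
          (ae_restrict_of_forall_mem measurableSet_Ioc fun t ht =>
            hinner s ⟨hs.1, hs.2.trans hxx'⟩ t ht)
          (intervalIntegrable_integral hG _ _ _)
    _ ≤ ∫ s in x₀..x', ∫ t in y₀..y', ∫ q in a..b, G s t q :=
        integral_mono_interval le_rfl hx hxx'
          (ae_restrict_of_forall_mem measurableSet_Ioc fun s hs =>
            integral_nonneg (hy.trans hyy') fun t ht => integral_nonneg hab fun q hq =>
              h s (Ioc_subset_Icc_self hs) t ht q hq)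
          (intervalIntegrable_integral_integral hG _ _)

lemma abs_iteratedIntegral_le (hx : x₀ ≤ x) (hy : y₀ ≤ y) (hab : a ≤ b)
    (hG : Continuous fun p : ℝ × ℝ × ℝ => G p.1 p.2.1 p.2.2) :
    |∫ s in x₀..x, ∫ t in y₀..y, ∫ q in a..b, G s t q| ≤
      ∫ s in x₀..x, ∫ t in y₀..y, ∫ q in a..b, |G s t q| :=
  (abs_integral_le_integral_abs hx).trans <|
  integral_mono_on hx (intervalIntegrable_integral_integral hG _ _).abs
    (intervalIntegrable_integral_integral hG.abs _ _) fun _ _ =>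
  (abs_integral_le_integral_abs hy).trans <|
  integral_mono_on hy (intervalIntegrable_integral hG _ _ _).abs
    (intervalIntegrable_integral (G := fun s t q => |G s t q|) hG.abs _ _ _) fun _ _ =>
  abs_integral_le_integral_abs hab

lemma iteratedIntegral_add (hG : Continuous fun p : ℝ × ℝ × ℝ => G p.1 p.2.1 p.2.2)
    (hG' : Continuous fun p : ℝ × ℝ × ℝ => G' p.1 p.2.1 p.2.2) :
    ∫ s in x₀..x, ∫ t in y₀..y, ∫ q in a..b, (G s t q + G' s t q) =
      (∫ s in x₀..x, ∫ t in y₀..y, ∫ q in a..b, G s t q) +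
        ∫ s in x₀..x, ∫ t in y₀..y, ∫ q in a..b, G' s t q := by
  simp only [integral_add (intervalIntegrable_apply₃ hG _ _ _ _)
    (intervalIntegrable_apply₃ hG' _ _ _ _),
    integral_add (intervalIntegrable_integral hG _ _ _) (intervalIntegrable_integral hG' _ _ _)]
  exact integral_add (intervalIntegrable_integral_integral hG _ _)
    (intervalIntegrable_integral_integral hG' _ _)

lemma abs_iteratedIntegral_le_of_abs_sub_le {c : ℝ → ℝ → ℝ → ℝ} (R : ℝ)
    (hx : x₀ ≤ x) (hy : y₀ ≤ y) (hab : a ≤ b)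
    (hG : Continuous fun p : ℝ × ℝ × ℝ => G p.1 p.2.1 p.2.2)
    (hG' : Continuous fun p : ℝ × ℝ × ℝ => G' p.1 p.2.1 p.2.2)
    (hc : Continuous fun p : ℝ × ℝ × ℝ => c p.1 p.2.1 p.2.2)
    (h : ∀ s ∈ Icc x₀ x, ∀ t ∈ Icc y₀ y, ∀ q ∈ Icc a b, |G s t q - G' s t q| ≤ R * c s t q) :
    |∫ s in x₀..x, ∫ t in y₀..y, ∫ q in a..b, G s t q| ≤
      (∫ s in x₀..x, ∫ t in y₀..y, ∫ q in a..b, |G' s t q|) +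
        R * ∫ s in x₀..x, ∫ t in y₀..y, ∫ q in a..b, c s t q := by
  calc |∫ s in x₀..x, ∫ t in y₀..y, ∫ q in a..b, G s t q|
      ≤ ∫ s in x₀..x, ∫ t in y₀..y, ∫ q in a..b, |G s t q| := abs_iteratedIntegral_le hx hy hab hG
    _ ≤ ∫ s in x₀..x, ∫ t in y₀..y, ∫ q in a..b, (|G' s t q| + R * c s t q) :=
        iteratedIntegral_mono hx hy hab hG.abs (hG'.abs.add (continuous_const.mul hc))
          fun s hs t ht q hq => by
            linarith [abs_sub_abs_le_abs_sub (G s t q) (G' s t q), h s hs t ht q hq]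
    _ = _ := by
        rw [iteratedIntegral_add hG'.abs (continuous_const.mul hc)]
        simp only [intervalIntegral.integral_const_mul]


lemma iteratedIntegral_le_mul_exp_of_le_add_mul {e f r k : ℝ → ℝ → ℝ → ℝ}
    (hx : x₀ ≤ x) (hy : y₀ ≤ y) (hab : a ≤ b)
    (he : Continuous fun p : ℝ × ℝ × ℝ => e p.1 p.2.1 p.2.2)
    (hf : Continuous fun p : ℝ × ℝ × ℝ => f p.1 p.2.1 p.2.2)
    (hr : Continuous fun p : ℝ × ℝ × ℝ => r p.1 p.2.1 p.2.2)
    (hk : Continuous fun p : ℝ × ℝ × ℝ => k p.1 p.2.1 p.2.2)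
    (he0 : ∀ s ∈ Icc x₀ x, ∀ t ∈ Icc y₀ y, ∀ q ∈ Icc a b, 0 ≤ e s t q)
    (hf0 : ∀ s ∈ Icc x₀ x, ∀ t ∈ Icc y₀ y, ∀ q ∈ Icc a b, 0 ≤ f s t q)
    (hr0 : ∀ s ∈ Icc x₀ x, ∀ t ∈ Icc y₀ y, ∀ q ∈ Icc a b, 0 ≤ r s t q)
    (hk0 : ∀ s ∈ Icc x₀ x, ∀ t ∈ Icc y₀ y, ∀ q ∈ Icc a b, 0 ≤ k s t q)
    (h : ∀ s ∈ Icc x₀ x, ∀ t ∈ Icc y₀ y, ∀ q ∈ Icc a b, e s t q ≤ k s t q +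
      r s t q * ∫ s' in x₀..s, ∫ t' in y₀..t, ∫ q' in a..b, f s' t' q' * e s' t' q') :
    ∫ s in x₀..x, ∫ t in y₀..y, ∫ q in a..b, f s t q * e s t q ≤
      (∫ s in x₀..x, ∫ t in y₀..y, ∫ q in a..b, f s t q * k s t q) *
        Real.exp (∫ s in x₀..x, ∫ t in y₀..y, ∫ q in a..b, f s t q * r s t q) := by
  set v : ℝ → ℝ := fun X => ∫ s in x₀..X, ∫ t in y₀..y, ∫ q in a..b, f s t q * e s t q
  have hfe := hf.mul he
  have hfr := hf.mul hr
  have hfk := hf.mul hk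
  have hv : Continuous v := continuous_primitive (intervalIntegrable_integral_integral hfe) x₀
  refine le_mul_exp_integral_of_le_add_integral_mul hx hv
    (continuous_parametric_integral_integral hfr continuous_const y₀ a b)
    (fun s hs => integral_nonneg hy fun t ht => integral_nonneg hab fun q hq =>
      mul_nonneg (hf0 s hs t ht q hq) (hr0 s hs t ht q hq)) fun x' hx' => ?_
  have hpoint : ∀ s ∈ Icc x₀ x', ∀ t ∈ Icc y₀ y, ∀ q ∈ Icc a b,
      f s t q * e s t q ≤ f s t q * k s t q + f s t q * r s t q * v s := by
    intro s hs t ht q hq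
    have hs' : s ∈ Icc x₀ x := ⟨hs.1, hs.2.trans hx'.2⟩
    have hm : ∫ s' in x₀..s, ∫ t' in y₀..t, ∫ q' in a..b, f s' t' q' * e s' t' q' ≤ v s :=
      iteratedIntegral_mono_of_le hs.1 le_rfl ht.1 ht.2 hab hfe fun σ hσ τ hτ ρ hρ =>
        have hσ' : σ ∈ Icc x₀ x := ⟨hσ.1, hσ.2.trans hs'.2⟩
        mul_nonneg (hf0 σ hσ' τ hτ ρ hρ) (he0 σ hσ' τ hτ ρ hρ)
    calc f s t q * e s t q
        ≤ f s t q * (k s t q + r s t q * v s) :=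
          mul_le_mul_of_nonneg_left ((h s hs' t ht q hq).trans
            (add_le_add_right (mul_le_mul_of_nonneg_left hm (hr0 s hs' t ht q hq)) _))
            (hf0 s hs' t ht q hq)
      _ = f s t q * k s t q + f s t q * r s t q * v s := by ring
  calc v x'
      ≤ ∫ s in x₀..x', ∫ t in y₀..y, ∫ q in a..b, (f s t q * k s t q + f s t q * r s t q * v s) :=
        iteratedIntegral_mono hx'.1 hy hab hfe (hfk.add (hfr.mul (hv.comp continuous_fst))) hpoint
    _ = (∫ s in x₀..x', ∫ t in y₀..y, ∫ q in a..b, f s t q * k s t q) +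
          ∫ τ in x₀..x', (∫ t in y₀..y, ∫ q in a..b, f τ t q * r τ t q) * v τ := by
        rw [iteratedIntegral_add hfk (hfr.mul (hv.comp continuous_fst))]
        simp only [intervalIntegral.integral_mul_const]
    _ ≤ _ := add_le_add_left (iteratedIntegral_mono_of_le hx'.1 hx'.2 hy le_rfl hab hfk
          fun s hs t ht q hq => mul_nonneg (hf0 s hs t ht q hq) (hk0 s hs t ht q hq)) _

end IteratedIntegral

/-- Continuous (𝕋 = ℝ) case of the paper's Theorem 3.2: estimate of the
deviation of a solution of a Volterra-type integral equation in three
variables from its forcing term, under a Lipschitz condition on the kernel. -/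
theorem stmt_6 (x₀ y₀ a b : ℝ) (hab : a ≤ b)
    (g : ℝ → ℝ → ℝ → ℝ) (F : ℝ → ℝ → ℝ → ℝ → ℝ → ℝ → ℝ → ℝ)
    (r f : ℝ → ℝ → ℝ → ℝ) (u : ℝ → ℝ → ℝ → ℝ) (k : ℝ → ℝ → ℝ → ℝ)
    (hg_cont : Continuous (fun p : ℝ × ℝ × ℝ => g p.1 p.2.1 p.2.2))
    (hF_cont : Continuous (fun p : (ℝ × ℝ × ℝ) × (ℝ × ℝ × ℝ) × ℝ =>
      F p.1.1 p.1.2.1 p.1.2.2 p.2.1.1 p.2.1.2.1 p.2.1.2.2 p.2.2))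
    (hr_cont : Continuous (fun p : ℝ × ℝ × ℝ => r p.1 p.2.1 p.2.2))
    (hf_cont : Continuous (fun p : ℝ × ℝ × ℝ => f p.1 p.2.1 p.2.2))
    (hu_cont : Continuous (fun p : ℝ × ℝ × ℝ => u p.1 p.2.1 p.2.2))
    (hr_nonneg : ∀ x, x₀ ≤ x → ∀ y, y₀ ≤ y → ∀ z ∈ Set.Icc a b, 0 ≤ r x y z)
    (hf_nonneg : ∀ x, x₀ ≤ x → ∀ y, y₀ ≤ y → ∀ z ∈ Set.Icc a b, 0 ≤ f x y z)
    (hF_lip : ∀ x, x₀ ≤ x → ∀ y, y₀ ≤ y → ∀ z ∈ Set.Icc a b,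
      ∀ s, x₀ ≤ s → ∀ t, y₀ ≤ t → ∀ q ∈ Set.Icc a b, ∀ w v : ℝ,
        |F x y z s t q w - F x y z s t q v| ≤ r x y z * f s t q * |w - v|)
    (heq : ∀ x, x₀ ≤ x → ∀ y, y₀ ≤ y → ∀ z ∈ Set.Icc a b,
      u x y z = g x y z +
        ∫ s in x₀..x, ∫ t in y₀..y, ∫ q in a..b, F x y z s t q (u s t q))
    (hk : ∀ x y z : ℝ, k x y z =
      ∫ s in x₀..x, ∫ t in y₀..y, ∫ q in a..b,
        |F x y z s t q (g s t q)|) :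
    ∀ x, x₀ ≤ x → ∀ y, y₀ ≤ y → ∀ z ∈ Set.Icc a b,
      |u x y z - g x y z| ≤ k x y z + r x y z *
        (∫ s in x₀..x, ∫ t in y₀..y, ∫ q in a..b, f s t q * k s t q) *
        Real.exp (∫ s in x₀..x, ∫ t in y₀..y, ∫ q in a..b,
      f s t q * r s t q) := by
  have hk_cont : Continuous fun p : ℝ × ℝ × ℝ => k p.1 p.2.1 p.2.2 :=
    (continuous_parametric_integral_integral_integral
      (K := fun p s t q => |F p.1 p.2.1 p.2.2 s t q (g s t q)|)
      (hF_cont.comp₃ continuous_fst continuous_snd (hg_cont.comp continuous_snd)).abs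
      continuous_fst continuous_snd.fst x₀ y₀ a b).congr fun p => (hk _ _ _).symm
  have hdev : ∀ x, x₀ ≤ x → ∀ y, y₀ ≤ y → ∀ z ∈ Set.Icc a b, |u x y z - g x y z| ≤
      k x y z + r x y z * ∫ s in x₀..x, ∫ t in y₀..y, ∫ q in a..b,
        f s t q * |u s t q - g s t q| := by
    intro x hx y hy z hz
    rw [heq x hx y hy z hz, add_sub_cancel_left, hk]
    exact abs_iteratedIntegral_le_of_abs_sub_le (r x y z) hx hy hab
      (hF_cont.comp₃ (e := fun _ => (x, y, z)) continuous_const continuous_id hu_cont)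
      (hF_cont.comp₃ (e := fun _ => (x, y, z)) continuous_const continuous_id hg_cont)
      (hf_cont.mul (hu_cont.sub hg_cont).abs) fun s hs t ht q hq =>
        (hF_lip x hx y hy z hz s hs.1 t ht.1 q hq _ _).trans_eq (mul_assoc _ _ _)
  intro x hx y hy z hz
  have hgronwall := iteratedIntegral_le_mul_exp_of_le_add_mul hx hy hab
    (e := fun s t q => |u s t q - g s t q|) (hu_cont.sub hg_cont).abs hf_cont hr_cont hk_cont
    (fun _ _ _ _ _ _ => abs_nonneg _)
    (fun s hs t ht q hq => hf_nonneg s hs.1 t ht.1 q hq)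
    (fun s hs t ht q hq => hr_nonneg s hs.1 t ht.1 q hq)
    (fun s hs t ht _ _ => by
      rw [hk]; exact iteratedIntegral_nonneg hs.1 ht.1 hab fun _ _ _ _ _ _ => abs_nonneg _)
    (fun s hs t ht q hq => hdev s hs.1 t ht.1 q hq)
  calc |u x y z - g x y z|
      ≤ k x y z + r x y z * ∫ s in x₀..x, ∫ t in y₀..y, ∫ q in a..b,
          f s t q * |u s t q - g s t q| := hdev x hx y hy z hz
    _ ≤ k x y z + r x y z *
          ((∫ s in x₀..x, ∫ t in y₀..y, ∫ q in a..b, f s t q * k s t q) *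
            Real.exp (∫ s in x₀..x, ∫ t in y₀..y, ∫ q in a..b, f s t q * r s t q)) := by
        gcongr
        exact hr_nonneg x hx y hy z hz
    _ = _ := by ring
end

section
/- Let x₀, y₀, a, b be real numbers with a ≤ b, and let H = [x₀,∞) × [y₀,∞) × [a,b]. Let g, v : ℝ³ → ℝ and F, G : ℝ³ × ℝ³ × ℝ → ℝ be continuous, and let r, f : ℝ³ → ℝ be continuous and nonnegative on H, with |F(x,y,z,s,t,q,w) − F(x,y,z,s,t,q,w')| ≤ r(x,y,z) · f(s,t,q) · |w − w'| for all (x,y,z), (s,t,q) ∈ H and all w, w' ∈ ℝ. Let u, h : ℝ³ → ℝ be continuous and satisfy, for all (x,y,z) ∈ H, u(x,y,z) = g(x,y,z) + ∫_{x₀}^{x} ∫_{y₀}^{y} ∫_{a}^{b} F(x,y,z,s,t,q,u(s,t,q)) dq dt ds and h(x,y,z) = v(x,y,z) + ∫_{x₀}^{x} ∫_{y₀}^{y} ∫_{a}^{b} G(x,y,z,s,t,q,h(s,t,q)) dq dt ds. Define ḡ(x,y,z) = |g(x,y,z) − v(x,y,z)| and k̄(x,y,z) = ∫_{x₀}^{x}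 ∫_{y₀}^{y} ∫_{a}^{b} |F(x,y,z,s,t,q,h(s,t,q)) − G(x,y,z,s,t,q,h(s,t,q))| dq dt ds. Then for all (x,y,z) ∈ H one has |u(x,y,z) − h(x,y,z)| ≤ [ḡ(x,y,z) + k̄(x,y,z)] + r(x,y,z) · C₄(x,y) · exp(∫_{x₀}^{x} Q₂(s,y) ds), where C₄(x,y) = ∫_{x₀}^{x} ∫_{y₀}^{y} ∫_{a}^{b} f(s,t,q) [ḡ(s,t,q) + k̄(s,t,q)] dq dt ds and Q₂(s,y) = ∫_{y₀}^{y} ∫_{a}^{b} f(s,t,q) r(s,t,q) dq dt. -/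
/-!
Subtracting the two equations and using the Lipschitz bound on `F`, the function
`w = |u - h|` satisfies `w ≤ ḡ + k̄ + r · ∫∫∫ f w` on `H`. Since `f w ≥ 0`, the triple integral
grows with its upper limit in `t`, so for fixed `y` the slice integral
`φ(s) = ∫∫_{[y₀,y]×[a,b]} f w` obeys the linear Volterra inequality
`φ(s) ≤ c(s) + Q₂(s) ∫_{x₀}^{s} φ` with `c(s) = ∫∫ f (ḡ + k̄)`. Gronwall's argument
(the function `(∫_{x₀}^{s} φ) e^{-∫_{x₀}^{s} Q₂} - ∫_{x₀}^{s} c` is antitone) gives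
`∫_{x₀}^{x} φ ≤ C₄ · exp (∫_{x₀}^{x} Q₂)`, which is plugged back into the first estimate.
-/

open Set intervalIntegral Real

section IteratedIntegral

variable {x₀ x y₀ y a b : ℝ}

theorem integral₂_nonneg (hy : y₀ ≤ y) (hab : a ≤ b) {K : ℝ → ℝ → ℝ}
    (hK : ∀ t ∈ Icc y₀ y, ∀ q ∈ Icc a b, 0 ≤ K t q) :
    0 ≤ ∫ t in y₀..y, ∫ q in a..b, K t q :=
  integral_nonneg hy fun t ht => integral_nonneg hab (hK t ht)

theorem integral₃_nonneg (hx : x₀ ≤ x) (hy : y₀ ≤ y) (hab : a ≤ b) {K : ℝ → ℝ → ℝ → ℝ}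
    (hK : ∀ s ∈ Icc x₀ x, ∀ t ∈ Icc y₀ y, ∀ q ∈ Icc a b, 0 ≤ K s t q) :
    0 ≤ ∫ s in x₀..x, ∫ t in y₀..y, ∫ q in a..b, K s t q :=
  integral_nonneg hx fun s hs => integral₂_nonneg hy hab (hK s hs)

theorem integral₂_mono_on (hy : y₀ ≤ y) (hab : a ≤ b) {K₁ K₂ : ℝ → ℝ → ℝ}
    (h₁ : Continuous fun p : ℝ × ℝ => K₁ p.1 p.2) (h₂ : Continuous fun p : ℝ × ℝ => K₂ p.1 p.2)
    (hle : ∀ t ∈ Icc y₀ y, ∀ q ∈ Icc a b, K₁ t q ≤ K₂ t q) :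
    ∫ t in y₀..y, ∫ q in a..b, K₁ t q ≤ ∫ t in y₀..y, ∫ q in a..b, K₂ t q :=
  integral_mono_on hy (Continuous.intervalIntegrable (by fun_prop) _ _)
    (Continuous.intervalIntegrable (by fun_prop) _ _) fun t ht =>
      integral_mono_on hab (Continuous.intervalIntegrable (by fun_prop) _ _)
        (Continuous.intervalIntegrable (by fun_prop) _ _) (hle t ht)

theorem integral₃_mono_snd_upper (hx : x₀ ≤ x) (hy : y₀ ≤ y) {y' : ℝ} (hyy' : y ≤ y')
    (hab : a ≤ b) {K : ℝ → ℝ → ℝ → ℝ} (hK : Continuous fun p : ℝ × ℝ × ℝ => K p.1 p.2.1 p.2.2)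
    (hK_nn : ∀ s ∈ Icc x₀ x, ∀ t ∈ Icc y₀ y', ∀ q ∈ Icc a b, 0 ≤ K s t q) :
    ∫ s in x₀..x, ∫ t in y₀..y, ∫ q in a..b, K s t q
      ≤ ∫ s in x₀..x, ∫ t in y₀..y', ∫ q in a..b, K s t q := by
  refine integral_mono_on hx (Continuous.intervalIntegrable (by fun_prop) _ _)
    (Continuous.intervalIntegrable (by fun_prop) _ _) fun s hs => ?_
  refine integral_mono_interval le_rfl hy hyy' ?_ (Continuous.intervalIntegrable (by fun_prop) _ _)
  filter_upwards [MeasureTheory.ae_restrict_mem measurableSet_Ioc] with t ht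
  exact integral_nonneg hab (hK_nn s hs t (Ioc_subset_Icc_self ht))

theorem abs_integral₃_le_of_abs_le (hx : x₀ ≤ x) (hy : y₀ ≤ y) (hab : a ≤ b)
    {K M : ℝ → ℝ → ℝ → ℝ} (hM : Continuous fun p : ℝ × ℝ × ℝ => M p.1 p.2.1 p.2.2)
    (hKM : ∀ s ∈ Icc x₀ x, ∀ t ∈ Icc y₀ y, ∀ q ∈ Icc a b, |K s t q| ≤ M s t q) :
    |∫ s in x₀..x, ∫ t in y₀..y, ∫ q in a..b, K s t q|
      ≤ ∫ s in x₀..x, ∫ t in y₀..y, ∫ q in a..b, M s t q := by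
  refine norm_integral_le_of_norm_le (E := ℝ) hx (.of_forall fun s hs => ?_) ?_
  · refine norm_integral_le_of_norm_le (E := ℝ) hy (.of_forall fun t ht => ?_) ?_
    · refine norm_integral_le_of_norm_le (E := ℝ) hab (.of_forall fun q hq => ?_) ?_
      · exact hKM s (Ioc_subset_Icc_self hs) t (Ioc_subset_Icc_self ht) q (Ioc_subset_Icc_self hq)
      · exact Continuous.intervalIntegrable (by fun_prop) _ _
    · exact Continuous.intervalIntegrable (by fun_prop) _ _
  · exact Continuous.intervalIntegrable (by fun_prop) _ _

theorem integral₂_add {K₁ K₂ : ℝ → ℝ → ℝ}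
    (h₁ : Continuous fun p : ℝ × ℝ => K₁ p.1 p.2) (h₂ : Continuous fun p : ℝ × ℝ => K₂ p.1 p.2) :
    ∫ t in y₀..y, ∫ q in a..b, (K₁ t q + K₂ t q)
      = (∫ t in y₀..y, ∫ q in a..b, K₁ t q) + ∫ t in y₀..y, ∫ q in a..b, K₂ t q := by
  rw [← integral_add (Continuous.intervalIntegrable (by fun_prop) _ _)
    (Continuous.intervalIntegrable (by fun_prop) _ _)]
  exact integral_congr fun t _ => integral_add (Continuous.intervalIntegrable (by fun_prop) _ _)
    (Continuous.intervalIntegrable (by fun_prop) _ _)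

theorem integral₃_add {K₁ K₂ : ℝ → ℝ → ℝ → ℝ}
    (h₁ : Continuous fun p : ℝ × ℝ × ℝ => K₁ p.1 p.2.1 p.2.2)
    (h₂ : Continuous fun p : ℝ × ℝ × ℝ => K₂ p.1 p.2.1 p.2.2) :
    ∫ s in x₀..x, ∫ t in y₀..y, ∫ q in a..b, (K₁ s t q + K₂ s t q)
      = (∫ s in x₀..x, ∫ t in y₀..y, ∫ q in a..b, K₁ s t q)
        + ∫ s in x₀..x, ∫ t in y₀..y, ∫ q in a..b, K₂ s t q := by
  rw [← integral_add (Continuous.intervalIntegrable (by fun_prop) _ _)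
    (Continuous.intervalIntegrable (by fun_prop) _ _)]
  exact integral_congr fun s _ => integral₂_add (by fun_prop) (by fun_prop)

theorem integral₃_sub {K₁ K₂ : ℝ → ℝ → ℝ → ℝ}
    (h₁ : Continuous fun p : ℝ × ℝ × ℝ => K₁ p.1 p.2.1 p.2.2)
    (h₂ : Continuous fun p : ℝ × ℝ × ℝ => K₂ p.1 p.2.1 p.2.2) :
    ∫ s in x₀..x, ∫ t in y₀..y, ∫ q in a..b, (K₁ s t q - K₂ s t q)
      = (∫ s in x₀..x, ∫ t in y₀..y, ∫ q in a..b, K₁ s t q)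
        - ∫ s in x₀..x, ∫ t in y₀..y, ∫ q in a..b, K₂ s t q := by
  rw [eq_sub_iff_add_eq, ← integral₃_add (K₁ := fun s t q => K₁ s t q - K₂ s t q) (by fun_prop) h₂]
  simp only [sub_add_cancel]

theorem continuous_integral₃_param {K : ℝ × ℝ × ℝ → ℝ → ℝ → ℝ → ℝ}
    (hK : Continuous fun w : (ℝ × ℝ × ℝ) × ℝ × ℝ × ℝ => K w.1 w.2.1 w.2.2.1 w.2.2.2) :
    Continuous fun p : ℝ × ℝ × ℝ => ∫ s in x₀..p.1, ∫ t in y₀..p.2.1, ∫ q in a..b, K p s t q := by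
  fun_prop

end IteratedIntegral

theorem continuous_integral₃_abs_sub {x₀ y₀ a b : ℝ} {F G : ℝ → ℝ → ℝ → ℝ → ℝ → ℝ → ℝ → ℝ}
    {h : ℝ → ℝ → ℝ → ℝ}
    (hF : Continuous fun p : (ℝ × ℝ × ℝ) × (ℝ × ℝ × ℝ) × ℝ =>
      F p.1.1 p.1.2.1 p.1.2.2 p.2.1.1 p.2.1.2.1 p.2.1.2.2 p.2.2)
    (hG : Continuous fun p : (ℝ × ℝ × ℝ) × (ℝ × ℝ × ℝ) × ℝ =>
      G p.1.1 p.1.2.1 p.1.2.2 p.2.1.1 p.2.1.2.1 p.2.1.2.2 p.2.2)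
    (hh : Continuous fun p : ℝ × ℝ × ℝ => h p.1 p.2.1 p.2.2) :
    Continuous fun p : ℝ × ℝ × ℝ => ∫ s in x₀..p.1, ∫ t in y₀..p.2.1, ∫ q in a..b,
      |F p.1 p.2.1 p.2.2 s t q (h s t q) - G p.1 p.2.1 p.2.2 s t q (h s t q)| := by
  have hsubst : Continuous fun p : (ℝ × ℝ × ℝ) × ℝ × ℝ × ℝ =>
      ((p.1, p.2, h p.2.1 p.2.2.1 p.2.2.2) : (ℝ × ℝ × ℝ) × (ℝ × ℝ × ℝ) × ℝ) := by
    fun_prop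
  exact continuous_integral₃_param ((hF.comp hsubst).sub (hG.comp hsubst)).abs

theorem integral_le_mul_exp_of_le_add_mul_integral {x₀ x : ℝ} (hx : x₀ ≤ x) {φ c Q : ℝ → ℝ}
    (hφ : Continuous φ) (hc : Continuous c) (hQ : Continuous Q)
    (hc_nn : ∀ s ∈ Icc x₀ x, 0 ≤ c s) (hQ_nn : ∀ s ∈ Icc x₀ x, 0 ≤ Q s)
    (hle : ∀ s ∈ Icc x₀ x, φ s ≤ c s + Q s * ∫ τ in x₀..s, φ τ) :
    ∫ s in x₀..x, φ s ≤ (∫ s in x₀..x, c s) * exp (∫ s in x₀..x, Q s) := by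
  set Φ := fun s => ∫ τ in x₀..s, φ τ
  set I := fun s => ∫ τ in x₀..s, Q τ
  set C := fun s => ∫ τ in x₀..s, c τ
  have hderiv : ∀ s, HasDerivAt (fun s => Φ s * exp (-I s) - C s)
      ((φ s - Q s * Φ s) * exp (-I s) - c s) s := fun s =>
    (((hφ.integral_hasStrictDerivAt x₀ s).hasDerivAt.mul
      (hQ.integral_hasStrictDerivAt x₀ s).hasDerivAt.neg.exp).sub
      (hc.integral_hasStrictDerivAt x₀ s).hasDerivAt).congr_deriv
        (by simp only [Pi.neg_apply, Φ, I]; ring)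
  have hanti : AntitoneOn (fun s => Φ s * exp (-I s) - C s) (Icc x₀ x) := by
    refine antitoneOn_of_hasDerivWithinAt_nonpos (convex_Icc _ _)
      (fun s _ => (hderiv s).continuousAt.continuousWithinAt)
      (fun s _ => (hderiv s).hasDerivWithinAt) fun s hs => ?_
    rw [interior_Icc] at hs
    have hI : 0 ≤ I s := integral_nonneg hs.1.le fun τ hτ => hQ_nn τ ⟨hτ.1, hτ.2.trans hs.2.le⟩
    have h₁ : (φ s - Q s * Φ s) * exp (-I s) ≤ c s * exp (-I s) :=
      mul_le_mul_of_nonneg_right (by linarith [hle s (Ioo_subset_Icc_self hs)]) (exp_pos _).le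
    have h₂ : c s * exp (-I s) ≤ c s :=
      mul_le_of_le_one_right (hc_nn s (Ioo_subset_Icc_self hs)) (exp_le_one_iff.2 (by linarith))
    linarith
  have hend := hanti (left_mem_Icc.2 hx) (right_mem_Icc.2 hx) hx
  simp only [Φ, I, C, integral_same, zero_mul, sub_zero, sub_nonpos, exp_neg] at hend
  rwa [← div_eq_mul_inv, div_le_iff₀ (exp_pos _)] at hend

theorem abs_integral₃_sub_le {x₀ x y₀ y a b : ℝ} (hx : x₀ ≤ x) (hy : y₀ ≤ y) (hab : a ≤ b)
    {K₁ K₂ : ℝ → ℝ → ℝ → ℝ → ℝ} {U V L : ℝ → ℝ → ℝ → ℝ}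
    (hK₁ : Continuous fun p : (ℝ × ℝ × ℝ) × ℝ => K₁ p.1.1 p.1.2.1 p.1.2.2 p.2)
    (hK₂ : Continuous fun p : (ℝ × ℝ × ℝ) × ℝ => K₂ p.1.1 p.1.2.1 p.1.2.2 p.2)
    (hU : Continuous fun p : ℝ × ℝ × ℝ => U p.1 p.2.1 p.2.2)
    (hV : Continuous fun p : ℝ × ℝ × ℝ => V p.1 p.2.1 p.2.2)
    (hL : Continuous fun p : ℝ × ℝ × ℝ => L p.1 p.2.1 p.2.2)
    (hK₁_lip : ∀ s ∈ Icc x₀ x, ∀ t ∈ Icc y₀ y, ∀ q ∈ Icc a b, ∀ w w' : ℝ,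
      |K₁ s t q w - K₁ s t q w'| ≤ L s t q * |w - w'|) :
    |(∫ s in x₀..x, ∫ t in y₀..y, ∫ q in a..b, K₁ s t q (U s t q))
        - ∫ s in x₀..x, ∫ t in y₀..y, ∫ q in a..b, K₂ s t q (V s t q)|
      ≤ (∫ s in x₀..x, ∫ t in y₀..y, ∫ q in a..b, L s t q * |U s t q - V s t q|)
        + ∫ s in x₀..x, ∫ t in y₀..y, ∫ q in a..b,
            |K₁ s t q (V s t q) - K₂ s t q (V s t q)| := by
  have hK₁U : Continuous fun p : ℝ × ℝ × ℝ => K₁ p.1 p.2.1 p.2.2 (U p.1 p.2.1 p.2.2) :=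
    hK₁.comp (continuous_id.prodMk hU)
  have hK₁V : Continuous fun p : ℝ × ℝ × ℝ => K₁ p.1 p.2.1 p.2.2 (V p.1 p.2.1 p.2.2) :=
    hK₁.comp (continuous_id.prodMk hV)
  have hK₂V : Continuous fun p : ℝ × ℝ × ℝ => K₂ p.1 p.2.1 p.2.2 (V p.1 p.2.1 p.2.2) :=
    hK₂.comp (continuous_id.prodMk hV)
  have hM₁ : Continuous fun p : ℝ × ℝ × ℝ =>
      L p.1 p.2.1 p.2.2 * |U p.1 p.2.1 p.2.2 - V p.1 p.2.1 p.2.2| :=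
    hL.mul (hU.sub hV).abs
  rw [← integral₃_sub hK₁U hK₂V, ← integral₃_add hM₁ (hK₁V.sub hK₂V).abs]
  refine abs_integral₃_le_of_abs_le hx hy hab (hM₁.add (hK₁V.sub hK₂V).abs)
    fun s hs t ht q hq => ?_
  calc |K₁ s t q (U s t q) - K₂ s t q (V s t q)|
      ≤ |K₁ s t q (U s t q) - K₁ s t q (V s t q)| + |K₁ s t q (V s t q) - K₂ s t q (V s t q)| :=
        abs_sub_le _ _ _
    _ ≤ L s t q * |U s t q - V s t q| + |K₁ s t q (V s t q) - K₂ s t q (V s t q)| :=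
        add_le_add_left (hK₁_lip s hs t ht q hq _ _) _

theorem integral₂_mul_le_of_le_add_mul_integral₃ {x₀ y₀ a b : ℝ} (hab : a ≤ b)
    {w A r f : ℝ → ℝ → ℝ → ℝ}
    (hw : Continuous fun p : ℝ × ℝ × ℝ => w p.1 p.2.1 p.2.2)
    (hA : Continuous fun p : ℝ × ℝ × ℝ => A p.1 p.2.1 p.2.2)
    (hr : Continuous fun p : ℝ × ℝ × ℝ => r p.1 p.2.1 p.2.2)
    (hf : Continuous fun p : ℝ × ℝ × ℝ => f p.1 p.2.1 p.2.2)
    (hw_nn : ∀ x, x₀ ≤ x → ∀ y, y₀ ≤ y → ∀ z ∈ Icc a b, 0 ≤ w x y z)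
    (hr_nn : ∀ x, x₀ ≤ x → ∀ y, y₀ ≤ y → ∀ z ∈ Icc a b, 0 ≤ r x y z)
    (hf_nn : ∀ x, x₀ ≤ x → ∀ y, y₀ ≤ y → ∀ z ∈ Icc a b, 0 ≤ f x y z)
    (hle : ∀ x, x₀ ≤ x → ∀ y, y₀ ≤ y → ∀ z ∈ Icc a b,
      w x y z ≤ A x y z + r x y z *
        ∫ s in x₀..x, ∫ t in y₀..y, ∫ q in a..b, f s t q * w s t q)
    {s y : ℝ} (hs : x₀ ≤ s) (hy : y₀ ≤ y) :
    ∫ t in y₀..y, ∫ q in a..b, f s t q * w s t q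
      ≤ (∫ t in y₀..y, ∫ q in a..b, f s t q * A s t q)
        + (∫ t in y₀..y, ∫ q in a..b, f s t q * r s t q)
          * ∫ τ in x₀..s, ∫ t in y₀..y, ∫ q in a..b, f τ t q * w τ t q := by
  set B := ∫ τ in x₀..s, ∫ t in y₀..y, ∫ q in a..b, f τ t q * w τ t q
  have hpt : ∀ t ∈ Icc y₀ y, ∀ q ∈ Icc a b,
      f s t q * w s t q ≤ f s t q * A s t q + f s t q * r s t q * B := by
    intro t ht q hq
    have hB : ∫ τ in x₀..s, ∫ t' in y₀..t, ∫ q in a..b, f τ t' q * w τ t' q ≤ B :=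
      integral₃_mono_snd_upper hs ht.1 ht.2 hab (hf.mul hw) fun τ hτ t' ht' q hq =>
        mul_nonneg (hf_nn τ hτ.1 t' ht'.1 q hq) (hw_nn τ hτ.1 t' ht'.1 q hq)
    have hw_le : w s t q ≤ A s t q + r s t q * B :=
      (hle s hs t ht.1 q hq).trans
        (add_le_add_right (mul_le_mul_of_nonneg_left hB (hr_nn s hs t ht.1 q hq)) _)
    linarith [mul_le_mul_of_nonneg_left hw_le (hf_nn s hs t ht.1 q hq)]
  calc ∫ t in y₀..y, ∫ q in a..b, f s t q * w s t q
      ≤ ∫ t in y₀..y, ∫ q in a..b, (f s t q * A s t q + f s t q * r s t q * B) :=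
        integral₂_mono_on hy hab (by fun_prop) (by fun_prop) hpt
    _ = _ := by
        rw [integral₂_add (by fun_prop) (by fun_prop)]
        simp only [integral_mul_const]

theorem le_add_mul_exp_of_le_add_mul_integral₃ {x₀ y₀ a b : ℝ} (hab : a ≤ b)
    {w A r f : ℝ → ℝ → ℝ → ℝ}
    (hw : Continuous fun p : ℝ × ℝ × ℝ => w p.1 p.2.1 p.2.2)
    (hA : Continuous fun p : ℝ × ℝ × ℝ => A p.1 p.2.1 p.2.2)
    (hr : Continuous fun p : ℝ × ℝ × ℝ => r p.1 p.2.1 p.2.2)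
    (hf : Continuous fun p : ℝ × ℝ × ℝ => f p.1 p.2.1 p.2.2)
    (hw_nn : ∀ x, x₀ ≤ x → ∀ y, y₀ ≤ y → ∀ z ∈ Icc a b, 0 ≤ w x y z)
    (hA_nn : ∀ x, x₀ ≤ x → ∀ y, y₀ ≤ y → ∀ z ∈ Icc a b, 0 ≤ A x y z)
    (hr_nn : ∀ x, x₀ ≤ x → ∀ y, y₀ ≤ y → ∀ z ∈ Icc a b, 0 ≤ r x y z)
    (hf_nn : ∀ x, x₀ ≤ x → ∀ y, y₀ ≤ y → ∀ z ∈ Icc a b, 0 ≤ f x y z)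
    (hle : ∀ x, x₀ ≤ x → ∀ y, y₀ ≤ y → ∀ z ∈ Icc a b,
      w x y z ≤ A x y z + r x y z *
        ∫ s in x₀..x, ∫ t in y₀..y, ∫ q in a..b, f s t q * w s t q) :
    ∀ x, x₀ ≤ x → ∀ y, y₀ ≤ y → ∀ z ∈ Icc a b,
      w x y z ≤ A x y z + r x y z *
        (∫ s in x₀..x, ∫ t in y₀..y, ∫ q in a..b, f s t q * A s t q) *
        exp (∫ s in x₀..x, ∫ t in y₀..y, ∫ q in a..b, f s t q * r s t q) := by
  intro x hx y hy z hz
  have hgronwall := integral_le_mul_exp_of_le_add_mul_integral hx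
    (by fun_prop) (by fun_prop) (by fun_prop)
    (fun s hs => integral₂_nonneg hy hab fun t ht q hq =>
      mul_nonneg (hf_nn s hs.1 t ht.1 q hq) (hA_nn s hs.1 t ht.1 q hq))
    (fun s hs => integral₂_nonneg hy hab fun t ht q hq =>
      mul_nonneg (hf_nn s hs.1 t ht.1 q hq) (hr_nn s hs.1 t ht.1 q hq))
    (fun s hs => integral₂_mul_le_of_le_add_mul_integral₃ hab hw hA hr hf hw_nn hr_nn hf_nn hle
      hs.1 hy)
  calc w x y z ≤ A x y z + r x y z *
        ∫ s in x₀..x, ∫ t in y₀..y, ∫ q in a..b, f s t q * w s t q := hle x hx y hy z hz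
    _ ≤ _ := by
        rw [mul_assoc]
        exact add_le_add_right (mul_le_mul_of_nonneg_left hgronwall (hr_nn x hx y hy z hz)) _

/-- Continuous (𝕋 = ℝ) case of the paper's Theorem 3.3: comparison between
solutions of two Volterra-type integral equations in three variables with
different kernels and forcing terms. -/
theorem stmt_8 (x₀ y₀ a b : ℝ) (hab : a ≤ b)
    (g v : ℝ → ℝ → ℝ → ℝ) (F G : ℝ → ℝ → ℝ → ℝ → ℝ → ℝ → ℝ → ℝ)
    (r f : ℝ → ℝ → ℝ → ℝ) (u h : ℝ → ℝ → ℝ → ℝ)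
    (gbar kbar : ℝ → ℝ → ℝ → ℝ)
    (hg_cont : Continuous (fun p : ℝ × ℝ × ℝ => g p.1 p.2.1 p.2.2))
    (hv_cont : Continuous (fun p : ℝ × ℝ × ℝ => v p.1 p.2.1 p.2.2))
    (hF_cont : Continuous (fun p : (ℝ × ℝ × ℝ) × (ℝ × ℝ × ℝ) × ℝ =>
      F p.1.1 p.1.2.1 p.1.2.2 p.2.1.1 p.2.1.2.1 p.2.1.2.2 p.2.2))
    (hG_cont : Continuous (fun p : (ℝ × ℝ × ℝ) × (ℝ × ℝ × ℝ) × ℝ =>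
      G p.1.1 p.1.2.1 p.1.2.2 p.2.1.1 p.2.1.2.1 p.2.1.2.2 p.2.2))
    (hr_cont : Continuous (fun p : ℝ × ℝ × ℝ => r p.1 p.2.1 p.2.2))
    (hf_cont : Continuous (fun p : ℝ × ℝ × ℝ => f p.1 p.2.1 p.2.2))
    (hu_cont : Continuous (fun p : ℝ × ℝ × ℝ => u p.1 p.2.1 p.2.2))
    (hh_cont : Continuous (fun p : ℝ × ℝ × ℝ => h p.1 p.2.1 p.2.2))
    (hr_nonneg : ∀ x, x₀ ≤ x → ∀ y, y₀ ≤ y → ∀ z ∈ Set.Icc a b, 0 ≤ r x y z)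
    (hf_nonneg : ∀ x, x₀ ≤ x → ∀ y, y₀ ≤ y → ∀ z ∈ Set.Icc a b, 0 ≤ f x y z)
    (hF_lip : ∀ x, x₀ ≤ x → ∀ y, y₀ ≤ y → ∀ z ∈ Set.Icc a b,
      ∀ s, x₀ ≤ s → ∀ t, y₀ ≤ t → ∀ q ∈ Set.Icc a b, ∀ w w' : ℝ,
        |F x y z s t q w - F x y z s t q w'| ≤ r x y z * f s t q * |w - w'|)
    (heq_u : ∀ x, x₀ ≤ x → ∀ y, y₀ ≤ y → ∀ z ∈ Set.Icc a b,
      u x y z = g x y z +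
        ∫ s in x₀..x, ∫ t in y₀..y, ∫ q in a..b, F x y z s t q (u s t q))
    (heq_h : ∀ x, x₀ ≤ x → ∀ y, y₀ ≤ y → ∀ z ∈ Set.Icc a b,
      h x y z = v x y z +
        ∫ s in x₀..x, ∫ t in y₀..y, ∫ q in a..b, G x y z s t q (h s t q))
    (hgbar : ∀ x y z : ℝ, gbar x y z = |g x y z - v x y z|)
    (hkbar : ∀ x y z : ℝ, kbar x y z =
      ∫ s in x₀..x, ∫ t in y₀..y, ∫ q in a..b,
        |F x y z s t q (h s t q) - G x y z s t q (h s t q)|) :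
    ∀ x, x₀ ≤ x → ∀ y, y₀ ≤ y → ∀ z ∈ Set.Icc a b,
      |u x y z - h x y z| ≤ (gbar x y z + kbar x y z) + r x y z *
        (∫ s in x₀..x, ∫ t in y₀..y, ∫ q in a..b,
          f s t q * (gbar s t q + kbar s t q)) *
        Real.exp (∫ s in x₀..x, ∫ t in y₀..y, ∫ q in a..b,
          f s t q * r s t q) := by
  have hA : Continuous fun p : ℝ × ℝ × ℝ => gbar p.1 p.2.1 p.2.2 + kbar p.1 p.2.1 p.2.2 := by
    simp only [hgbar, hkbar]
    exact (hg_cont.sub hv_cont).abs.add (continuous_integral₃_abs_sub hF_cont hG_cont hh_cont)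
  have hA_nn : ∀ x, x₀ ≤ x → ∀ y, y₀ ≤ y → ∀ z ∈ Icc a b, 0 ≤ gbar x y z + kbar x y z :=
    fun x hx y hy z _ => by
      rw [hgbar, hkbar]
      exact add_nonneg (abs_nonneg _) (integral₃_nonneg hx hy hab fun _ _ _ _ _ _ => abs_nonneg _)
  have hkey : ∀ x, x₀ ≤ x → ∀ y, y₀ ≤ y → ∀ z ∈ Icc a b,
      |u x y z - h x y z| ≤ (gbar x y z + kbar x y z) + r x y z *
        ∫ s in x₀..x, ∫ t in y₀..y, ∫ q in a..b, f s t q * |u s t q - h s t q| := by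
    intro x hx y hy z hz
    have hcmp := abs_integral₃_sub_le (K₁ := F x y z) (K₂ := G x y z) hx hy hab
      (hF_cont.comp (.prodMk_right (x, y, z))) (hG_cont.comp (.prodMk_right (x, y, z)))
      hu_cont hh_cont (by fun_prop)
      fun s hs t ht q hq => hF_lip x hx y hy z hz s hs.1 t ht.1 q hq
    simp only [mul_assoc, integral_const_mul] at hcmp
    calc |u x y z - h x y z|
        ≤ |g x y z - v x y z| + |(∫ s in x₀..x, ∫ t in y₀..y, ∫ q in a..b, F x y z s t q (u s t q))
            - ∫ s in x₀..x, ∫ t in y₀..y, ∫ q in a..b, G x y z s t q (h s t q)| := by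
          rw [heq_u x hx y hy z hz, heq_h x hx y hy z hz, add_sub_add_comm]
          exact abs_add_le _ _
      _ ≤ _ := by
          rw [hgbar, hkbar]
          linarith
  exact le_add_mul_exp_of_le_add_mul_integral₃ hab (hu_cont.sub hh_cont).abs hA hr_cont hf_cont
    (fun _ _ _ _ _ _ => abs_nonneg _) hA_nn hr_nonneg hf_nonneg hkey
end

section
/- Let a, b be natural numbers with a ≤ b. Let g, v : ℕ³ → ℝ, F, G : ℕ³ × ℕ³ × ℝ → ℝ, and nonnegative r, f : ℕ³ → ℝ satisfy |F(x,y,z,s,t,q,w) − F(x,y,z,s,t,q,w')| ≤ r(x,y,z) · f(s,t,q) · |w − w'| for all arguments with a ≤ z ≤ b, a ≤ q ≤ b, and all w, w' ∈ ℝ. Let u, h : ℕ³ → ℝ satisfy, for all x, y ∈ ℕ and a ≤ z ≤ b, u(x,y,z) = g(x,y,z) + Σ_{s=0}^{x-1} Σ_{t=0}^{y-1} Σ_{q=a}^{b} F(x,y,z,s,t,q,u(s,t,q)) and h(x,y,z) = v(x,y,z) + Σ_{s=0}^{x-1} Σ_{t=0}^{y-1} Σ_{q=a}^{b} G(x,y,z,s,t,q,h(s,t,q)).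 Define ḡ(x,y,z) = |g(x,y,z) − v(x,y,z)| and k̄(x,y,z) = Σ_{s=0}^{x-1} Σ_{t=0}^{y-1} Σ_{q=a}^{b} |F(x,y,z,s,t,q,h(s,t,q)) − G(x,y,z,s,t,q,h(s,t,q))|. Then for all x, y ∈ ℕ and a ≤ z ≤ b one has |u(x,y,z) − h(x,y,z)| ≤ [ḡ(x,y,z) + k̄(x,y,z)] + r(x,y,z) · C₄(x,y) · ∏_{s=0}^{x-1} (1 + Q₂(s,y)), where C₄(x,y) = Σ_{s=0}^{x-1} Σ_{t=0}^{y-1} Σ_{q=a}^{b} f(s,t,q) [ḡ(s,t,q) + k̄(s,t,q)] and Q₂(s,y) = Σ_{t=0}^{y-1} Σ_{q=a}^{b} f(s,t,q) r(s,t,q). -/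
/-!
Subtracting the two equations and using the Lipschitz bound on `F` gives, for the error
`e = |u - h|`, the implicit bound `e ≤ (ḡ + k̄) + r Φ`, where `Φ(x, y)` is the `f`-weighted sum
of `e` over `[0, x) × [0, y) × [a, b]`. As `Φ` is nondecreasing in `y`, inserting this bound into
`Φ` itself gives, for fixed `y`, `Φ(x) ≤ ∑_{s<x} (C(s) + Q₂(s) Φ(s))` with `C₄(x) = ∑_{s<x} C(s)`.
Its right-hand side `w` obeys the recurrence `w(s+1) ≤ (1 + Q₂(s)) w(s) + C(s)`, and the discrete
Gronwall inequality bounds it by `C₄(x) ∏_{s<x} (1 + Q₂(s))`.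
-/

open Finset

theorem discrete_gronwall_sum {R : Type*} [CommSemiring R] [PartialOrder R] [IsOrderedRing R]
    {C Q ψ : ℕ → R} (hC : ∀ s, 0 ≤ C s) (hQ : ∀ s, 0 ≤ Q s)
    (hψ : ∀ x, ψ x ≤ ∑ s ∈ range x, (C s + Q s * ψ s)) (x : ℕ) :
    ψ x ≤ (∑ s ∈ range x, C s) * ∏ s ∈ range x, (1 + Q s) := by
  set w : ℕ → R := fun x => ∑ s ∈ range x, (C s + Q s * ψ s)
  have hw : ∀ n ≥ 0, w (n + 1) ≤ (1 + Q n) * w n + C n := fun n _ => by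
    have := hQ n
    calc w (n + 1) = w n + (C n + Q n * ψ n) := sum_range_succ _ _
      _ ≤ w n + (C n + Q n * w n) := by gcongr; exact hψ n
      _ = (1 + Q n) * w n + C n := by ring
  have hQ₁ : ∀ s, 1 ≤ 1 + Q s := fun s => le_add_of_nonneg_right (hQ s)
  calc ψ x ≤ w x := hψ x
    _ ≤ w 0 * ∏ s ∈ Ico 0 x, (1 + Q s) + ∑ k ∈ Ico 0 x, C k * ∏ s ∈ Ico (k + 1) x, (1 + Q s) :=
        discrete_gronwall_prod_general hw (fun s _ => (zero_le_one.trans (hQ₁ s))) x.zero_le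
    _ ≤ ∑ k ∈ range x, C k * ∏ s ∈ range x, (1 + Q s) := by
        simp only [w, range_zero, sum_empty, zero_mul, zero_add, ← range_eq_Ico]
        gcongr with k _
        · exact hC k
        · exact fun s _ => zero_le_one.trans (hQ₁ s)
        · exact fun s _ _ => hQ₁ s
        · exact fun s hs => mem_range.2 (mem_Ico.1 hs).2
    _ = _ := (sum_mul ..).symm

theorem discrete_gronwall₃ {R : Type*} [CommSemiring R] [PartialOrder R] [IsOrderedRing R]
    {a b : ℕ} {e c r f : ℕ → ℕ → ℕ → R}
    (hr : ∀ x y z, 0 ≤ r x y z) (hf : ∀ x y z, 0 ≤ f x y z)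
    (he : ∀ x y z, 0 ≤ e x y z) (hc : ∀ x y z, 0 ≤ c x y z)
    (hbound : ∀ x y z, a ≤ z → z ≤ b → e x y z ≤ c x y z + r x y z *
      ∑ s ∈ range x, ∑ t ∈ range y, ∑ q ∈ Icc a b, f s t q * e s t q)
    {x y z : ℕ} (hz₁ : a ≤ z) (hz₂ : z ≤ b) :
    e x y z ≤ c x y z + r x y z *
      (∑ s ∈ range x, ∑ t ∈ range y, ∑ q ∈ Icc a b, f s t q * c s t q) *
      ∏ s ∈ range x, (1 + ∑ t ∈ range y, ∑ q ∈ Icc a b, f s t q * r s t q) := by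
  set Φ : ℕ → ℕ → R := fun x y =>
    ∑ s ∈ range x, ∑ t ∈ range y, ∑ q ∈ Icc a b, f s t q * e s t q
  have hΦ_mono : ∀ s {t y}, t ≤ y → Φ s t ≤ Φ s y := fun s t y hty => by
    refine sum_le_sum fun _ _ => sum_le_sum_of_subset_of_nonneg (range_subset_range.2 hty) ?_
    exact fun _ _ _ => sum_nonneg fun _ _ => mul_nonneg (hf _ _ _) (he _ _ _)
  have hrec : ∀ x, Φ x y ≤ ∑ s ∈ range x,
      ((∑ t ∈ range y, ∑ q ∈ Icc a b, f s t q * c s t q) +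
        (∑ t ∈ range y, ∑ q ∈ Icc a b, f s t q * r s t q) * Φ s y) := by
    refine fun x => sum_le_sum fun s _ => ?_
    simp only [sum_mul, ← sum_add_distrib]
    gcongr with t ht q hq
    obtain ⟨hq₁, hq₂⟩ := mem_Icc.1 hq
    calc f s t q * e s t q ≤ f s t q * (c s t q + r s t q * Φ s t) :=
          mul_le_mul_of_nonneg_left (hbound s t q hq₁ hq₂) (hf s t q)
      _ ≤ f s t q * (c s t q + r s t q * Φ s y) := by
          have := hf s t q
          have := hr s t q
          gcongr
          exact hΦ_mono s (mem_range.1 ht).le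
      _ = f s t q * c s t q + f s t q * r s t q * Φ s y := by ring
  calc e x y z ≤ c x y z + r x y z * Φ x y := hbound x y z hz₁ hz₂
    _ ≤ c x y z + r x y z * ((∑ s ∈ range x, ∑ t ∈ range y, ∑ q ∈ Icc a b, f s t q * c s t q) *
          ∏ s ∈ range x, (1 + ∑ t ∈ range y, ∑ q ∈ Icc a b, f s t q * r s t q)) := by
        have := hr x y z
        gcongr
        refine discrete_gronwall_sum (fun s => ?_) (fun s => ?_) hrec x
        · exact sum_nonneg fun t _ => sum_nonneg fun q _ => mul_nonneg (hf s t q) (hc s t q)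
        · exact sum_nonneg fun t _ => sum_nonneg fun q _ => mul_nonneg (hf s t q) (hr s t q)
    _ = _ := by rw [mul_assoc]

theorem abs_sum_sub_sum_le {ι G : Type*} [AddCommGroup G] [LinearOrder G] [IsOrderedAddMonoid G]
    (s : Finset ι) (f g : ι → G) :
    |∑ i ∈ s, f i - ∑ i ∈ s, g i| ≤ ∑ i ∈ s, |f i - g i| := by
  rw [← sum_sub_distrib]
  exact abs_sum_le_sum_abs _ _

theorem abs_sum₃_sub_sum₃_le {α β γ G : Type*} [AddCommGroup G] [LinearOrder G]
    [IsOrderedAddMonoid G] (X : Finset α) (Y : Finset β) (Z : Finset γ) (A B : α → β → γ → G) :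
    |∑ s ∈ X, ∑ t ∈ Y, ∑ q ∈ Z, A s t q - ∑ s ∈ X, ∑ t ∈ Y, ∑ q ∈ Z, B s t q| ≤
      ∑ s ∈ X, ∑ t ∈ Y, ∑ q ∈ Z, |A s t q - B s t q| :=
  (abs_sum_sub_sum_le _ _ _).trans <| sum_le_sum fun _ _ =>
    (abs_sum_sub_sum_le _ _ _).trans <| sum_le_sum fun _ _ => abs_sum_sub_sum_le _ _ _

theorem abs_sub_le_of_sum_eq {a b : ℕ} {g v r f u h : ℕ → ℕ → ℕ → ℝ}
    {F G : ℕ → ℕ → ℕ → ℕ → ℕ → ℕ → ℝ → ℝ}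
    (hF_lip : ∀ x y z s t q, a ≤ z → z ≤ b → a ≤ q → q ≤ b → ∀ w w' : ℝ,
      |F x y z s t q w - F x y z s t q w'| ≤ r x y z * f s t q * |w - w'|)
    (heq_u : ∀ x y z, a ≤ z → z ≤ b → u x y z = g x y z +
      ∑ s ∈ range x, ∑ t ∈ range y, ∑ q ∈ Icc a b, F x y z s t q (u s t q))
    (heq_h : ∀ x y z, a ≤ z → z ≤ b → h x y z = v x y z +
      ∑ s ∈ range x, ∑ t ∈ range y, ∑ q ∈ Icc a b, G x y z s t q (h s t q))
    {x y z : ℕ} (hz₁ : a ≤ z) (hz₂ : z ≤ b) :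
    |u x y z - h x y z| ≤ (|g x y z - v x y z| +
      ∑ s ∈ range x, ∑ t ∈ range y, ∑ q ∈ Icc a b,
        |F x y z s t q (h s t q) - G x y z s t q (h s t q)|) + r x y z *
      ∑ s ∈ range x, ∑ t ∈ range y, ∑ q ∈ Icc a b, f s t q * |u s t q - h s t q| := by
  have hlip : ∑ s ∈ range x, ∑ t ∈ range y, ∑ q ∈ Icc a b,
      |F x y z s t q (u s t q) - F x y z s t q (h s t q)| ≤ r x y z *
        ∑ s ∈ range x, ∑ t ∈ range y, ∑ q ∈ Icc a b, f s t q * |u s t q - h s t q| := by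
    simp only [mul_sum, ← mul_assoc]
    gcongr with s _ t _ q hq
    exact hF_lip x y z s t q hz₁ hz₂ (mem_Icc.1 hq).1 (mem_Icc.1 hq).2 _ _
  rw [heq_u x y z hz₁ hz₂, heq_h x y z hz₁ hz₂]
  calc _ = |(g x y z - v x y z) +
        (∑ s ∈ range x, ∑ t ∈ range y, ∑ q ∈ Icc a b, F x y z s t q (h s t q) -
          ∑ s ∈ range x, ∑ t ∈ range y, ∑ q ∈ Icc a b, G x y z s t q (h s t q)) +
        (∑ s ∈ range x, ∑ t ∈ range y, ∑ q ∈ Icc a b, F x y z s t q (u s t q) -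
          ∑ s ∈ range x, ∑ t ∈ range y, ∑ q ∈ Icc a b, F x y z s t q (h s t q))| := by
        congr 1; ring
    _ ≤ _ := (abs_add_three _ _ _).trans <|
        add_le_add (add_le_add le_rfl (abs_sum₃_sub_sum₃_le _ _ _ _ _))
          ((abs_sum₃_sub_sum₃_le _ _ _ _ _).trans hlip)

theorem stmt_9_general (a b : ℕ)
    (g v : ℕ → ℕ → ℕ → ℝ) (F G : ℕ → ℕ → ℕ → ℕ → ℕ → ℕ → ℝ → ℝ)
    (r f : ℕ → ℕ → ℕ → ℝ) (u h : ℕ → ℕ → ℕ → ℝ)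
    (gbar kbar : ℕ → ℕ → ℕ → ℝ)
    (hr_nonneg : ∀ x y z, 0 ≤ r x y z)
    (hf_nonneg : ∀ x y z, 0 ≤ f x y z)
    (hF_lip : ∀ x y z s t q, a ≤ z → z ≤ b → a ≤ q → q ≤ b → ∀ w w' : ℝ,
      |F x y z s t q w - F x y z s t q w'| ≤ r x y z * f s t q * |w - w'|)
    (heq_u : ∀ x y z, a ≤ z → z ≤ b →
      u x y z = g x y z +
        ∑ s ∈ Finset.range x, ∑ t ∈ Finset.range y, ∑ q ∈ Finset.Icc a b,
          F x y z s t q (u s t q))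
    (heq_h : ∀ x y z, a ≤ z → z ≤ b →
      h x y z = v x y z +
        ∑ s ∈ Finset.range x, ∑ t ∈ Finset.range y, ∑ q ∈ Finset.Icc a b,
          G x y z s t q (h s t q))
    (hgbar : ∀ x y z, gbar x y z = |g x y z - v x y z|)
    (hkbar : ∀ x y z, kbar x y z =
      ∑ s ∈ Finset.range x, ∑ t ∈ Finset.range y, ∑ q ∈ Finset.Icc a b,
        |F x y z s t q (h s t q) - G x y z s t q (h s t q)|) :
    ∀ x y z, a ≤ z → z ≤ b →
      |u x y z - h x y z| ≤ (gbar x y z + kbar x y z) + r x y z *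
        (∑ s ∈ Finset.range x, ∑ t ∈ Finset.range y, ∑ q ∈ Finset.Icc a b,
          f s t q * (gbar s t q + kbar s t q)) *
        ∏ s ∈ Finset.range x,
          (1 + ∑ t ∈ Finset.range y, ∑ q ∈ Finset.Icc a b,
            f s t q * r s t q) := by
  intro x y z hz₁ hz₂
  have hc : ∀ x y z, 0 ≤ gbar x y z + kbar x y z := fun x y z => by
    rw [hgbar, hkbar]
    positivity
  refine discrete_gronwall₃ (e := fun x y z => |u x y z - h x y z|) hr_nonneg hf_nonneg
    (fun _ _ _ => abs_nonneg _) hc (fun x y z hz₁ hz₂ => ?_) hz₁ hz₂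
  rw [hgbar, hkbar]
  exact abs_sub_le_of_sum_eq hF_lip heq_u heq_h hz₁ hz₂

/-- Discrete (𝕋 = ℤ, restricted to ℕ with base points 0) case of the paper's
Theorem 3.3: comparison between solutions of two sum (Volterra-type)
equations in three variables with different kernels and forcing terms. -/
theorem stmt_9 (a b : ℕ) (hab : a ≤ b)
    (g v : ℕ → ℕ → ℕ → ℝ) (F G : ℕ → ℕ → ℕ → ℕ → ℕ → ℕ → ℝ → ℝ)
    (r f : ℕ → ℕ → ℕ → ℝ) (u h : ℕ → ℕ → ℕ → ℝ)
    (gbar kbar : ℕ → ℕ → ℕ → ℝ)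
    (hr_nonneg : ∀ x y z, 0 ≤ r x y z)
    (hf_nonneg : ∀ x y z, 0 ≤ f x y z)
    (hF_lip : ∀ x y z s t q, a ≤ z → z ≤ b → a ≤ q → q ≤ b → ∀ w w' : ℝ,
      |F x y z s t q w - F x y z s t q w'| ≤ r x y z * f s t q * |w - w'|)
    (heq_u : ∀ x y z, a ≤ z → z ≤ b →
      u x y z = g x y z +
        ∑ s ∈ Finset.range x, ∑ t ∈ Finset.range y, ∑ q ∈ Finset.Icc a b,
          F x y z s t q (u s t q))
    (heq_h : ∀ x y z, a ≤ z → z ≤ b →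
      h x y z = v x y z +
        ∑ s ∈ Finset.range x, ∑ t ∈ Finset.range y, ∑ q ∈ Finset.Icc a b,
          G x y z s t q (h s t q))
    (hgbar : ∀ x y z, gbar x y z = |g x y z - v x y z|)
    (hkbar : ∀ x y z, kbar x y z =
      ∑ s ∈ Finset.range x, ∑ t ∈ Finset.range y, ∑ q ∈ Finset.Icc a b,
        |F x y z s t q (h s t q) - G x y z s t q (h s t q)|) :
    ∀ x y z, a ≤ z → z ≤ b →
      |u x y z - h x y z| ≤ (gbar x y z + kbar x y z) + r x y z *
        (∑ s ∈ Finset.range x, ∑ t ∈ Finset.range y, ∑ q ∈ Finset.Icc a b,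
          f s t q * (gbar s t q + kbar s t q)) *
        ∏ s ∈ Finset.range x,
          (1 + ∑ t ∈ Finset.range y, ∑ q ∈ Finset.Icc a b,
            f s t q * r s t q) :=
  stmt_9_general a b g v F G r f u h gbar kbar hr_nonneg hf_nonneg hF_lip heq_u heq_h hgbar hkbar
end
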